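/- arXiv:2306.14183 — 5 statements merged into one kernel-verified Lean document; each statement's English description precedes it below -/
import Mathlib

section
/- Let F be a complex Hilbert space and let W : L²(ℝ₊, F) → ℓ²(ℕ, L²([0,1], F)) be defined by (W f)_n(α) = f(n + α) for n ∈ ℕ and α ∈ [0,1]. Then W is a unitary, and for every t ≥ 0, writing n = ⌊t⌋ (so n ≤ t < n+1), one has W S_t^F W* = M_t, where M_t is the bounded operator on ℓ²(ℕ, L²([0,1], F)) given by (M_t g)_m = E_{0,t−n}^F g_{m−n} + E_{1,t−n}^F g_{m−n−1} (with the convention g_k = 0 for k < 0). In particular, the right-shift semigroup S^F is unitarily equivalent to the semigroup (M_t)_{t≥0}. -/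
open MeasureTheory ContinuousLinearMap
open scoped ENNReal NNReal InnerProductSpace ComplexInnerProductSpace

noncomputable section

/-- Lebesgue measure restricted to `ℝ₊ = [0, ∞)`; `Lp F 2 rplus` plays the role of
`L²(ℝ₊, F)`. -/
def rplus : Measure ℝ := (volume : Measure ℝ).restrict (Set.Ici 0)

/-- `T` is the right shift by `t` on `L²(ℝ₊, F)`:
`(T f)(x) = f (x - t)` for `x ≥ t` and `(T f)(x) = 0` otherwise. -/
def IsRightShiftOp (F : Type) [NormedAddCommGroup F] [InnerProductSpace ℂ F]
    (t : ℝ) (T : Lp F 2 rplus →L[ℂ] Lp F 2 rplus) : Prop :=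
  ∀ f : Lp F 2 rplus,
    (T f : ℝ → F) =ᵐ[rplus] fun x => if t ≤ x then (f : ℝ → F) (x - t) else 0

/-- Lebesgue measure restricted to `[0, 1]`; `Lp F 2 muI` plays the role of `L²([0,1], F)`. -/
def muI : Measure ℝ := (volume : Measure ℝ).restrict (Set.Icc 0 1)

/-- `T` is the operator `E_{0,s}^F` on `L²([0,1], F)`:
`(T f)(x) = f (x - s)` for `s ≤ x ≤ 1` and `(T f)(x) = 0` for `x < s`. -/
def IsE0 (F : Type) [NormedAddCommGroup F] [InnerProductSpace ℂ F]
    (s : ℝ) (T : Lp F 2 muI →L[ℂ] Lp F 2 muI) : Prop :=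
  ∀ f : Lp F 2 muI,
    (T f : ℝ → F) =ᵐ[muI] fun x => if s ≤ x then (f : ℝ → F) (x - s) else 0

/-- `T` is the operator `E_{1,s}^F` on `L²([0,1], F)`:
`(T f)(x) = f (1 - s + x)` for `x ≤ s` and `(T f)(x) = 0` for `s < x ≤ 1`. -/
def IsE1 (F : Type) [NormedAddCommGroup F] [InnerProductSpace ℂ F]
    (s : ℝ) (T : Lp F 2 muI →L[ℂ] Lp F 2 muI) : Prop :=
  ∀ f : Lp F 2 muI,
    (T f : ℝ → F) =ᵐ[muI] fun x => if x ≤ s then (f : ℝ → F) (1 - s + x) else 0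

set_option linter.unusedSectionVars false

namespace RightShiftBCL

open Set Filter

lemma muI_def : muI = (volume : Measure ℝ).restrict (Set.Icc 0 1) := rfl

lemma rplus_def : rplus = (volume : Measure ℝ).restrict (Set.Ici 0) := rfl

variable {F : Type} [NormedAddCommGroup F] [InnerProductSpace ℂ F] [CompleteSpace F]

/-- Transfer of a.e. statements along translation. -/
lemma ae_add (c : ℝ) {t : Set ℝ} (ht : MeasurableSet t) {p : ℝ → Prop}
    (h : ∀ᵐ x ∂((volume : Measure ℝ).restrict t), p x) :
    ∀ᵐ x ∂(volume : Measure ℝ), (c + x ∈ t → p (c + x)) := by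
  rw [ae_iff] at h ⊢
  rw [Measure.restrict_apply' ht] at h
  have hsub : {x : ℝ | ¬(c + x ∈ t → p (c + x))} ⊆ (fun x => c + x) ⁻¹' ({x | ¬ p x} ∩ t) := by
    intro x hx
    rw [Set.mem_setOf_eq, _root_.not_imp] at hx
    exact ⟨hx.2, hx.1⟩
  refine measure_mono_null hsub ?_
  rw [measure_preimage_add]
  exact h

lemma ae_add_muI (c : ℝ) {t : Set ℝ} (ht : MeasurableSet t) {p : ℝ → Prop}
    (h : ∀ᵐ x ∂((volume : Measure ℝ).restrict t), p x) :
    ∀ᵐ x ∂muI, (c + x ∈ t → p (c + x)) :=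
  (ae_add c ht h).filter_mono (ae_mono Measure.restrict_le_self)

lemma ae_add_rplus (c : ℝ) {t : Set ℝ} (ht : MeasurableSet t) {p : ℝ → Prop}
    (h : ∀ᵐ x ∂((volume : Measure ℝ).restrict t), p x) :
    ∀ᵐ x ∂rplus, (c + x ∈ t → p (c + x)) :=
  (ae_add c ht h).filter_mono (ae_mono Measure.restrict_le_self)

lemma muI_mem : ∀ᵐ x ∂muI, x ∈ Set.Icc (0:ℝ) 1 := by
  rw [muI_def]; exact ae_restrict_mem measurableSet_Icc

lemma muI_ae_ne (a : ℝ) : ∀ᵐ x ∂muI, x ≠ a := by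
  rw [ae_iff]
  have h1 : {x : ℝ | ¬ x ≠ a} ⊆ {a} := by
    intro x hx
    simpa using not_not.mp hx
  have h2 : muI {a} = 0 := by
    rw [muI_def, Measure.restrict_apply (measurableSet_singleton a)]
    exact measure_mono_null Set.inter_subset_left (Real.volume_singleton)
  exact measure_mono_null h1 h2

lemma lintegral_Icc_shift (c : ℝ) (H : ℝ → ℝ≥0∞) :
    ∫⁻ α in Set.Icc (0:ℝ) 1, H (c + α) = ∫⁻ x in Set.Icc c (c+1), H x :=
  calc ∫⁻ α in Set.Icc (0:ℝ) 1, H (c + α)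
      = ∫⁻ α, (Set.Icc (0:ℝ) 1).indicator (fun α => H (c + α)) α :=
        (lintegral_indicator measurableSet_Icc _).symm
    _ = ∫⁻ α, (Set.Icc c (c+1)).indicator H (c + α) := by
        refine lintegral_congr fun α => ?_
        by_cases hα : α ∈ Set.Icc (0:ℝ) 1
        · rw [Set.indicator_of_mem hα, Set.indicator_of_mem]
          exact ⟨by linarith [hα.1], by linarith [hα.2]⟩
        · rw [Set.indicator_of_notMem hα, Set.indicator_of_notMem]
          intro hmem
          exact hα ⟨by linarith [hmem.1], by linarith [hmem.2]⟩
    _ = ∫⁻ x, (Set.Icc c (c+1)).indicator H x := lintegral_add_left_eq_self _ c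
    _ = ∫⁻ x in Set.Icc c (c+1), H x := lintegral_indicator measurableSet_Icc _

lemma Ico_union : (⋃ n : ℕ, Set.Ico (n:ℝ) (n+1)) = Set.Ici 0 := by
  ext x
  simp only [Set.mem_iUnion, Set.mem_Ico, Set.mem_Ici]
  constructor
  · rintro ⟨n, h1, _⟩
    exact le_trans (Nat.cast_nonneg n) h1
  · intro hx
    exact ⟨⌊x⌋₊, Nat.floor_le hx, Nat.lt_floor_add_one x⟩

lemma Ico_disj : Pairwise (Function.onFun Disjoint fun n : ℕ => Set.Ico (n:ℝ) (n+1)) := by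
  intro i j hij
  simp only [Function.onFun]
  rw [Set.Ico_disjoint_Ico]
  rcases hij.lt_or_gt with h | h
  · have h' : (i:ℝ) + 1 ≤ (j:ℝ) := by exact_mod_cast h
    calc min ((i:ℝ)+1) ((j:ℝ)+1) ≤ (i:ℝ)+1 := min_le_left _ _
      _ ≤ (j:ℝ) := h'
      _ ≤ max (i:ℝ) (j:ℝ) := le_max_right _ _
  · have h' : (j:ℝ) + 1 ≤ (i:ℝ) := by exact_mod_cast h
    calc min ((i:ℝ)+1) ((j:ℝ)+1) ≤ (j:ℝ)+1 := min_le_right _ _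
      _ ≤ (i:ℝ) := h'
      _ ≤ max (i:ℝ) (j:ℝ) := le_max_left _ _

/-- The main computation: summing the squared `L²`-masses of the unit-length segments. -/
lemma seg_lintegral (u : ℝ → F) :
    (∑' n : ℕ, ∫⁻ α, (‖u ((n:ℝ) + α)‖₊ : ℝ≥0∞) ^ (2:ℝ) ∂muI)
      = ∫⁻ x, (‖u x‖₊ : ℝ≥0∞) ^ (2:ℝ) ∂rplus := by
  have hstep : ∀ n : ℕ, (∫⁻ α, (‖u ((n:ℝ) + α)‖₊ : ℝ≥0∞) ^ (2:ℝ) ∂muI)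
      = ∫⁻ x in Set.Ico (n:ℝ) ((n:ℝ)+1), (‖u x‖₊ : ℝ≥0∞) ^ (2:ℝ) := by
    intro n
    rw [muI_def]
    rw [show (∫⁻ α in Set.Icc (0:ℝ) 1, (‖u ((n:ℝ) + α)‖₊ : ℝ≥0∞) ^ (2:ℝ))
        = ∫⁻ x in Set.Icc (n:ℝ) ((n:ℝ)+1), (‖u x‖₊ : ℝ≥0∞) ^ (2:ℝ) from
      lintegral_Icc_shift (n:ℝ) (fun x => (‖u x‖₊ : ℝ≥0∞) ^ (2:ℝ))]
    rw [Measure.restrict_congr_set Ico_ae_eq_Icc]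
  rw [tsum_congr hstep, rplus_def, ← Ico_union,
    lintegral_iUnion (fun n => measurableSet_Ico) Ico_disj]

lemma memℒp_two_of {μ : Measure ℝ} {u : ℝ → F} (hm : AEStronglyMeasurable u μ)
    (h : (∫⁻ x, (‖u x‖₊ : ℝ≥0∞) ^ (2:ℝ) ∂μ) ≠ ∞) : MemLp u 2 μ := by
  refine ⟨hm, ?_⟩
  rw [eLpNorm_eq_lintegral_rpow_enorm_toReal (by norm_num) (by norm_num)]
  have h2 : (2:ℝ≥0∞).toReal = (2:ℝ) := by norm_num
  rw [h2]
  exact ENNReal.rpow_lt_top_of_nonneg (by norm_num) h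

lemma lintegral_sq_ne_top {μ : Measure ℝ} (x : Lp F 2 μ) :
    (∫⁻ y, (‖(x : ℝ → F) y‖₊ : ℝ≥0∞) ^ (2:ℝ) ∂μ) ≠ ∞ := by
  have h := Lp.eLpNorm_lt_top x
  rw [eLpNorm_eq_lintegral_rpow_enorm_toReal (by norm_num) (by norm_num)] at h
  simp only [enorm_eq_nnnorm] at h
  have h2 : (2:ℝ≥0∞).toReal = (2:ℝ) := by norm_num
  rw [h2] at h
  intro hcon
  rw [hcon, ENNReal.top_rpow_of_pos (by norm_num)] at h
  exact lt_irrefl _ h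

lemma norm_rpow_two {μ : Measure ℝ} (x : Lp F 2 μ) :
    ‖x‖ ^ (2:ℝ) = (∫⁻ y, (‖(x : ℝ → F) y‖₊ : ℝ≥0∞) ^ (2:ℝ) ∂μ).toReal := by
  have h2 : (2:ℝ≥0∞).toReal = (2:ℝ) := by norm_num
  rw [Lp.norm_def, eLpNorm_eq_lintegral_rpow_enorm_toReal (by norm_num) (by norm_num), h2,
    ← ENNReal.toReal_rpow, ← Real.rpow_mul ENNReal.toReal_nonneg]
  norm_num
  rfl

end RightShiftBCL

namespace RightShiftBCL

open Set Filter

variable {F : Type} [NormedAddCommGroup F] [InnerProductSpace ℂ F] [CompleteSpace F]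

lemma Ici_nonneg_mem (n : ℕ) {α : ℝ} (hα : α ∈ Set.Icc (0:ℝ) 1) : (n:ℝ) + α ∈ Set.Ici (0:ℝ) := by
  have := hα.1
  have h2 : (0:ℝ) ≤ (n:ℝ) := Nat.cast_nonneg n
  simp only [Set.mem_Ici]
  linarith

lemma memℒp_seg (f : Lp F 2 rplus) (n : ℕ) :
    MemLp (fun α => (f : ℝ → F) ((n:ℝ) + α)) 2 muI := by
  have hf := Lp.aestronglyMeasurable f
  have heq : ∀ᵐ α ∂muI, (f : ℝ → F) ((n:ℝ) + α) = hf.mk _ ((n:ℝ) + α) := by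
    have h := ae_add_muI (n:ℝ) measurableSet_Ici (p := fun x => (f : ℝ → F) x = hf.mk _ x)
      (by rw [← rplus_def]; exact hf.ae_eq_mk)
    filter_upwards [h, muI_mem] with α h1 h2
    exact h1 (Ici_nonneg_mem n h2)
  have hmeas : AEStronglyMeasurable (fun α => (f : ℝ → F) ((n:ℝ) + α)) muI := by
    refine ⟨fun α => hf.mk _ ((n:ℝ) + α), ?_, heq⟩
    exact hf.stronglyMeasurable_mk.comp_measurable (measurable_const_add _)
  refine memℒp_two_of hmeas ?_
  have hle : (∫⁻ α, (‖(f : ℝ → F) ((n:ℝ) + α)‖₊ : ℝ≥0∞) ^ (2:ℝ) ∂muI)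
      ≤ ∫⁻ x, (‖(f : ℝ → F) x‖₊ : ℝ≥0∞) ^ (2:ℝ) ∂rplus := by
    rw [← seg_lintegral (fun x => (f : ℝ → F) x)]
    exact ENNReal.le_tsum n
  exact fun hcon => lintegral_sq_ne_top f (top_le_iff.mp (hcon ▸ hle))

/-- The `n`-th segment of `f`, as an element of `L²([0,1], F)`. -/
def segLp (f : Lp F 2 rplus) (n : ℕ) : Lp F 2 muI := (memℒp_seg f n).toLp _

lemma segLp_coe (f : Lp F 2 rplus) (n : ℕ) :
    (segLp f n : ℝ → F) =ᵐ[muI] fun α => (f : ℝ → F) ((n:ℝ) + α) :=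
  MemLp.coeFn_toLp _

lemma segLp_norm (f : Lp F 2 rplus) (n : ℕ) :
    ‖segLp f n‖ ^ (2:ℝ)
      = (∫⁻ α, (‖(f : ℝ → F) ((n:ℝ) + α)‖₊ : ℝ≥0∞) ^ (2:ℝ) ∂muI).toReal := by
  rw [norm_rpow_two (segLp f n)]
  congr 1
  refine lintegral_congr_ae ?_
  filter_upwards [segLp_coe f n] with α hα
  rw [hα]

lemma memℓp_segLp (f : Lp F 2 rplus) : Memℓp (fun n => segLp f n) 2 := by
  apply memℓp_gen
  have h2 : (2:ℝ≥0∞).toReal = (2:ℝ) := by norm_num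
  rw [h2]
  have hfin : (∑' n : ℕ, ∫⁻ α, (‖(f : ℝ → F) ((n:ℝ) + α)‖₊ : ℝ≥0∞) ^ (2:ℝ) ∂muI) ≠ ∞ := by
    rw [seg_lintegral (fun x => (f : ℝ → F) x)]
    exact lintegral_sq_ne_top f
  refine Summable.congr (ENNReal.summable_toReal hfin) ?_
  intro n
  rw [segLp_norm f n]

/-- The candidate unitary, as a function into `ℓ²`. -/
def Wfun (f : Lp F 2 rplus) : lp (fun _ : ℕ => Lp F 2 muI) 2 :=
  ⟨fun n => segLp f n, memℓp_segLp f⟩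

lemma Wfun_apply (f : Lp F 2 rplus) (n : ℕ) : (Wfun f) n = segLp f n := rfl

lemma Wfun_norm (f : Lp F 2 rplus) : ‖Wfun f‖ = ‖f‖ := by
  have h2 : (2:ℝ≥0∞).toReal = (2:ℝ) := by norm_num
  have hp : 0 < (2:ℝ≥0∞).toReal := by norm_num
  rw [lp.norm_eq_tsum_rpow hp, h2]
  have htsum : (∑' n : ℕ, ‖(Wfun f) n‖ ^ (2:ℝ)) = ‖f‖ ^ (2:ℝ) := by
    have hfin : (∑' n : ℕ, ∫⁻ α, (‖(f : ℝ → F) ((n:ℝ) + α)‖₊ : ℝ≥0∞) ^ (2:ℝ) ∂muI) ≠ ∞ := by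
      rw [seg_lintegral (fun x => (f : ℝ → F) x)]
      exact lintegral_sq_ne_top f
    have hterm : ∀ n : ℕ,
        (∫⁻ α, (‖(f : ℝ → F) ((n:ℝ) + α)‖₊ : ℝ≥0∞) ^ (2:ℝ) ∂muI) ≠ ∞ := by
      intro n
      intro hcon
      apply hfin
      exact top_le_iff.mp (hcon ▸ ENNReal.le_tsum n)
    calc (∑' n : ℕ, ‖(Wfun f) n‖ ^ (2:ℝ))
        = ∑' n : ℕ, (∫⁻ α, (‖(f : ℝ → F) ((n:ℝ) + α)‖₊ : ℝ≥0∞) ^ (2:ℝ) ∂muI).toReal := by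
          refine tsum_congr fun n => ?_
          rw [Wfun_apply, segLp_norm]
      _ = (∑' n : ℕ, ∫⁻ α, (‖(f : ℝ → F) ((n:ℝ) + α)‖₊ : ℝ≥0∞) ^ (2:ℝ) ∂muI).toReal :=
          (ENNReal.tsum_toReal_eq hterm).symm
      _ = (∫⁻ x, (‖(f : ℝ → F) x‖₊ : ℝ≥0∞) ^ (2:ℝ) ∂rplus).toReal := by
          rw [seg_lintegral (fun x => (f : ℝ → F) x)]
      _ = ‖f‖ ^ (2:ℝ) := (norm_rpow_two f).symm
  rw [htsum, ← Real.rpow_mul (norm_nonneg f)]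
  norm_num

lemma segLp_add (f g : Lp F 2 rplus) (n : ℕ) :
    segLp (f + g) n = segLp f n + segLp g n := by
  apply Lp.ext
  have hadd : ∀ᵐ α ∂muI, (f + g : Lp F 2 rplus) ((n:ℝ) + α)
      = (f : ℝ → F) ((n:ℝ) + α) + (g : ℝ → F) ((n:ℝ) + α) := by
    have h := ae_add_muI (n:ℝ) measurableSet_Ici
      (p := fun x => ((f + g : Lp F 2 rplus) : ℝ → F) x = (f : ℝ → F) x + (g : ℝ → F) x)
      (by rw [← rplus_def]
          filter_upwards [Lp.coeFn_add f g] with x hx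
          simpa using hx)
    filter_upwards [h, muI_mem] with α h1 h2
    exact h1 (Ici_nonneg_mem n h2)
  filter_upwards [segLp_coe (f + g) n, segLp_coe f n, segLp_coe g n,
    Lp.coeFn_add (segLp f n) (segLp g n), hadd] with α h1 h2 h3 h4 h5
  rw [h1, h4, h5]
  simp only [Pi.add_apply]
  rw [h2, h3]

lemma segLp_smul (c : ℂ) (f : Lp F 2 rplus) (n : ℕ) :
    segLp (c • f) n = c • segLp f n := by
  apply Lp.ext
  have hsmul : ∀ᵐ α ∂muI, ((c • f : Lp F 2 rplus) : ℝ → F) ((n:ℝ) + α)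
      = c • (f : ℝ → F) ((n:ℝ) + α) := by
    have h := ae_add_muI (n:ℝ) measurableSet_Ici
      (p := fun x => ((c • f : Lp F 2 rplus) : ℝ → F) x = c • (f : ℝ → F) x)
      (by rw [← rplus_def]
          filter_upwards [Lp.coeFn_smul c f] with x hx
          simpa using hx)
    filter_upwards [h, muI_mem] with α h1 h2
    exact h1 (Ici_nonneg_mem n h2)
  filter_upwards [segLp_coe (c • f) n, segLp_coe f n,
    Lp.coeFn_smul c (segLp f n), hsmul] with α h1 h2 h3 h4
  rw [h1, h3, h4]
  simp only [Pi.smul_apply]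
  rw [h2]

/-- The candidate unitary, as a linear isometry. -/
def Wiso : Lp F 2 rplus →ₗᵢ[ℂ] lp (fun _ : ℕ => Lp F 2 muI) 2 where
  toFun := Wfun
  map_add' f g := by
    apply lp.ext
    funext n
    show segLp (f + g) n = segLp f n + segLp g n
    exact segLp_add f g n
  map_smul' c f := by
    apply lp.ext
    funext n
    show segLp (c • f) n = c • segLp f n
    exact segLp_smul c f n
  norm_map' := Wfun_norm

lemma Wiso_apply (f : Lp F 2 rplus) (n : ℕ) : (Wiso f) n = segLp f n := rfl

end RightShiftBCL

namespace RightShiftBCL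

open Set Filter

variable {F : Type} [NormedAddCommGroup F] [InnerProductSpace ℂ F] [CompleteSpace F]

/-- The function on `ℝ₊` supported on `[n, n+1)` whose `n`-th segment is `g`. -/
def singFun (n : ℕ) (g : Lp F 2 muI) : ℝ → F :=
  (Set.Ico (n:ℝ) ((n:ℝ)+1)).indicator fun x => (g : ℝ → F) (-(n:ℝ) + x)

lemma mem_Ico_shift {n : ℕ} {x : ℝ} (hx : x ∈ Set.Ico (n:ℝ) ((n:ℝ)+1)) :
    -(n:ℝ) + x ∈ Set.Icc (0:ℝ) 1 :=
  ⟨by linarith [hx.1], by linarith [hx.2]⟩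

lemma memℒp_sing (n : ℕ) (g : Lp F 2 muI) : MemLp (singFun n g) 2 rplus := by
  have hg := Lp.aestronglyMeasurable g
  have hmeas : AEStronglyMeasurable (singFun n g) rplus := by
    refine ⟨(Set.Ico (n:ℝ) ((n:ℝ)+1)).indicator fun x => hg.mk _ (-(n:ℝ) + x), ?_, ?_⟩
    · exact (hg.stronglyMeasurable_mk.comp_measurable
        (measurable_const_add _)).indicator measurableSet_Ico
    · have h := ae_add_rplus (-(n:ℝ)) measurableSet_Icc
        (p := fun x => (g : ℝ → F) x = hg.mk _ x)
        (by rw [← muI_def]; exact hg.ae_eq_mk)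
      filter_upwards [h] with x hx
      by_cases hmem : x ∈ Set.Ico (n:ℝ) ((n:ℝ)+1)
      · rw [singFun, Set.indicator_of_mem hmem, Set.indicator_of_mem hmem]
        exact hx (mem_Ico_shift hmem)
      · rw [singFun, Set.indicator_of_notMem hmem, Set.indicator_of_notMem hmem]
  refine memℒp_two_of hmeas ?_
  have hpt : (fun x => (‖singFun n g x‖₊ : ℝ≥0∞) ^ (2:ℝ))
      = (Set.Ico (n:ℝ) ((n:ℝ)+1)).indicator
          fun x => (‖(g : ℝ → F) (-(n:ℝ) + x)‖₊ : ℝ≥0∞) ^ (2:ℝ) := by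
    funext x
    by_cases hmem : x ∈ Set.Ico (n:ℝ) ((n:ℝ)+1)
    · rw [singFun, Set.indicator_of_mem hmem, Set.indicator_of_mem hmem]
    · rw [singFun, Set.indicator_of_notMem hmem, Set.indicator_of_notMem hmem]
      simp [ENNReal.zero_rpow_of_pos]
  rw [hpt, lintegral_indicator measurableSet_Ico]
  have hIco : Set.Ico (n:ℝ) ((n:ℝ)+1) ∩ Set.Ici (0:ℝ) = Set.Ico (n:ℝ) ((n:ℝ)+1) := by
    refine Set.inter_eq_self_of_subset_left fun x hx => ?_
    have h2 : (0:ℝ) ≤ (n:ℝ) := Nat.cast_nonneg n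
    exact le_trans h2 hx.1
  rw [rplus_def, Measure.restrict_restrict measurableSet_Ico, hIco,
    Measure.restrict_congr_set Ico_ae_eq_Icc,
    ← lintegral_Icc_shift (n:ℝ) (fun x => (‖(g : ℝ → F) (-(n:ℝ) + x)‖₊ : ℝ≥0∞) ^ (2:ℝ))]
  have : (∫⁻ α in Set.Icc (0:ℝ) 1, (‖(g : ℝ → F) (-(n:ℝ) + ((n:ℝ) + α))‖₊ : ℝ≥0∞) ^ (2:ℝ))
      = ∫⁻ α in Set.Icc (0:ℝ) 1, (‖(g : ℝ → F) α‖₊ : ℝ≥0∞) ^ (2:ℝ) := by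
    refine lintegral_congr fun α => ?_
    rw [neg_add_cancel_left]
  rw [this]
  exact lintegral_sq_ne_top (μ := muI) g

/-- The preimage of `lp.single 2 n g` under `W`. -/
def singLp (n : ℕ) (g : Lp F 2 muI) : Lp F 2 rplus := (memℒp_sing n g).toLp _

lemma Wiso_singLp (n : ℕ) (g : Lp F 2 muI) :
    Wiso (singLp n g) = lp.single 2 n g := by
  apply lp.ext
  funext m
  change segLp (singLp n g) m = _
  have hcoe : ∀ᵐ α ∂muI, (singLp n g : ℝ → F) ((m:ℝ) + α) = singFun n g ((m:ℝ) + α) := by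
    have h := ae_add_muI (m:ℝ) measurableSet_Ici
      (p := fun x => (singLp n g : ℝ → F) x = singFun n g x)
      (by rw [← rplus_def]; exact MemLp.coeFn_toLp _)
    filter_upwards [h, muI_mem] with α h1 h2
    exact h1 (Ici_nonneg_mem m h2)
  by_cases hmn : m = n
  · subst hmn
    rw [lp.single_apply_self]
    apply Lp.ext
    filter_upwards [segLp_coe (singLp m g) m, hcoe, muI_mem, muI_ae_ne 1]
      with α h1 h2 hα hne
    rw [h1, h2, singFun, Set.indicator_of_mem, neg_add_cancel_left]
    have hα1 : α < 1 := lt_of_le_of_ne hα.2 hne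
    exact ⟨by linarith [hα.1], by linarith⟩
  · rw [lp.single_apply_ne (E := fun _ : ℕ => Lp F 2 muI) 2 n g hmn]
    apply Lp.ext
    filter_upwards [segLp_coe (singLp n g) m, hcoe, muI_mem, muI_ae_ne 1,
      Lp.coeFn_zero F 2 muI] with α h1 h2 hα hne h0
    have hα1 : α < 1 := lt_of_le_of_ne hα.2 hne
    have hnotmem : ((m:ℝ) + α) ∉ Set.Ico (n:ℝ) ((n:ℝ)+1) := by
      intro hmem
      rcases Nat.lt_or_ge m n with h | h
      · have hc : (m:ℝ) + 1 ≤ (n:ℝ) := by exact_mod_cast h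
        linarith [hmem.1]
      · have hc : (n:ℝ) ≤ (m:ℝ) := by exact_mod_cast h
        rcases lt_or_eq_of_le hc with h' | h'
        · have hc2 : (n:ℝ) + 1 ≤ (m:ℝ) := by
            have : n + 1 ≤ m := by exact_mod_cast (by exact_mod_cast h' : n < m)
            exact_mod_cast this
          linarith [hmem.2, hα.1]
        · exact hmn (by exact_mod_cast h'.symm)
    rw [h1, h2, h0, singFun, Set.indicator_of_notMem hnotmem]
    simp

lemma Wiso_surjective :
    Function.Surjective (Wiso : Lp F 2 rplus →ₗᵢ[ℂ] lp (fun _ : ℕ => Lp F 2 muI) 2) := by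
  intro x
  have hsum : HasSum (fun n : ℕ => lp.single 2 n (x n)) x :=
    lp.hasSum_single (by norm_num) x
  have hcomp : (fun sfin : Finset ℕ => ∑ n ∈ sfin, lp.single 2 n (x n))
      = (⇑(Wiso : Lp F 2 rplus →ₗᵢ[ℂ] lp (fun _ : ℕ => Lp F 2 muI) 2))
          ∘ (fun sfin : Finset ℕ => ∑ n ∈ sfin, singLp n (x n)) := by
    funext sfin
    simp only [Function.comp_apply, map_sum, Wiso_singLp]
  have hcau : CauchySeq (fun sfin : Finset ℕ => ∑ n ∈ sfin, singLp n (x n)) := by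
    have himg : CauchySeq ((⇑(Wiso : Lp F 2 rplus →ₗᵢ[ℂ] lp (fun _ : ℕ => Lp F 2 muI) 2))
        ∘ (fun sfin : Finset ℕ => ∑ n ∈ sfin, singLp n (x n))) := by
      rw [← hcomp]
      exact Filter.Tendsto.cauchySeq hsum
    have hui := (Wiso : Lp F 2 rplus →ₗᵢ[ℂ] lp (fun _ : ℕ => Lp F 2 muI) 2)
      |>.isometry.isUniformInducing
    unfold CauchySeq at himg ⊢
    rw [← Filter.map_map] at himg
    exact hui.cauchy_map_iff.mp himg
  obtain ⟨y, hy⟩ := cauchySeq_tendsto_of_complete hcau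
  refine ⟨y, ?_⟩
  have hWy : HasSum (fun n : ℕ => Wiso (singLp n (x n))) (Wiso y) := by
    have hsumy : HasSum (fun n : ℕ => singLp n (x n)) y := hy
    exact hsumy.map
      (Wiso : Lp F 2 rplus →ₗᵢ[ℂ] lp (fun _ : ℕ => Lp F 2 muI) 2).toLinearMap.toAddMonoidHom
      Wiso.continuous
  have hWy' : HasSum (fun n : ℕ => lp.single 2 n (x n)) (Wiso y) := by
    refine HasSum.congr_fun hWy ?_
    intro n
    rw [Wiso_singLp]
  exact (hsum.unique hWy').symm

end RightShiftBCL

set_option maxHeartbeats 1000000 in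
/-- The unitary `W : L²(ℝ₊, F) → ℓ²(ℕ, L²([0,1], F))`, `(W f)_n(α) = f(n + α)`,
intertwines the right-shift semigroup with the semigroup `(M_t)`,
`(M_t g)_m = E_{0,t-n}^F g_{m-n} + E_{1,t-n}^F g_{m-n-1}` where `n = ⌊t⌋`. -/
theorem right_shift_bcl_model (F : Type) [NormedAddCommGroup F] [InnerProductSpace ℂ F]
    [CompleteSpace F] :
    ∃ W : Lp F 2 rplus ≃ₗᵢ[ℂ] lp (fun _ : ℕ => Lp F 2 muI) 2,
      (∀ (f : Lp F 2 rplus) (n : ℕ),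
        ((W f) n : ℝ → F) =ᵐ[muI] fun α => (f : ℝ → F) ((n : ℝ) + α)) ∧
      ∀ t : ℝ, 0 ≤ t →
        ∀ S : Lp F 2 rplus →L[ℂ] Lp F 2 rplus, IsRightShiftOp F t S →
          ∀ E0 E1 : Lp F 2 muI →L[ℂ] Lp F 2 muI,
            IsE0 F (t - (⌊t⌋₊ : ℝ)) E0 → IsE1 F (t - (⌊t⌋₊ : ℝ)) E1 →
            ∀ (f : Lp F 2 rplus) (m : ℕ),
              (W (S f)) m =
                (if ⌊t⌋₊ ≤ m then E0 ((W f) (m - ⌊t⌋₊)) else 0) +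
                (if ⌊t⌋₊ + 1 ≤ m then E1 ((W f) (m - ⌊t⌋₊ - 1)) else 0) := by
  classical
  set W := LinearIsometryEquiv.ofSurjective (RightShiftBCL.Wiso (F := F))
    RightShiftBCL.Wiso_surjective with hWdef
  have hWeq : ∀ f : Lp F 2 rplus, W f = RightShiftBCL.Wiso f := fun f =>
    congrFun (LinearIsometryEquiv.coe_ofSurjective _ _) f
  have hprop : ∀ (f : Lp F 2 rplus) (n : ℕ),
      ((W f) n : ℝ → F) =ᵐ[muI] fun α => (f : ℝ → F) ((n : ℝ) + α) := by
    intro f n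
    rw [hWeq f]
    exact RightShiftBCL.segLp_coe f n
  refine ⟨W, hprop, ?_⟩
  intro t ht S hS E0 E1 hE0 hE1 f m
  have hnt : ((⌊t⌋₊ : ℕ) : ℝ) ≤ t := Nat.floor_le ht
  have hlt : t < (⌊t⌋₊ : ℝ) + 1 := Nat.lt_floor_add_one t
  have hs0 : 0 ≤ t - (⌊t⌋₊ : ℝ) := sub_nonneg.mpr hnt
  have hs1 : t - (⌊t⌋₊ : ℝ) < 1 := by linarith
  have hA := hprop (S f) m
  have hSf : ∀ᵐ α ∂muI, ((m:ℝ) + α ∈ Set.Ici (0:ℝ) →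
      (S f : ℝ → F) ((m:ℝ) + α)
        = if t ≤ (m:ℝ) + α then (f : ℝ → F) ((m:ℝ) + α - t) else 0) :=
    RightShiftBCL.ae_add_muI (m:ℝ) measurableSet_Ici
      (p := fun x => (S f : ℝ → F) x = if t ≤ x then (f : ℝ → F) (x - t) else 0) (hS f)
  by_cases h1 : ⌊t⌋₊ ≤ m
  · have hcast1 : ((m - ⌊t⌋₊ : ℕ) : ℝ) = (m:ℝ) - (⌊t⌋₊ : ℝ) := by
      rw [Nat.cast_sub h1]
    have hW1 : ∀ᵐ α ∂muI, (-(t - (⌊t⌋₊:ℝ)) + α ∈ Set.Icc (0:ℝ) 1 →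
        ((W f) (m - ⌊t⌋₊) : ℝ → F) (-(t - (⌊t⌋₊:ℝ)) + α)
          = (f : ℝ → F) (((m - ⌊t⌋₊ : ℕ) : ℝ) + (-(t - (⌊t⌋₊:ℝ)) + α))) :=
      RightShiftBCL.ae_add_muI (-(t - (⌊t⌋₊:ℝ))) measurableSet_Icc
        (p := fun x => ((W f) (m - ⌊t⌋₊) : ℝ → F) x
          = (f : ℝ → F) (((m - ⌊t⌋₊ : ℕ) : ℝ) + x)) (hprop f (m - ⌊t⌋₊))
    have hE0f := hE0 ((W f) (m - ⌊t⌋₊))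
    by_cases h2 : ⌊t⌋₊ + 1 ≤ m
    · -- m ≥ ⌊t⌋ + 1 : both terms present
      rw [if_pos h1, if_pos h2]
      have hm1 : (⌊t⌋₊ : ℝ) + 1 ≤ (m:ℝ) := by exact_mod_cast h2
      have hcast2 : ((m - ⌊t⌋₊ - 1 : ℕ) : ℝ) = (m:ℝ) - (⌊t⌋₊ : ℝ) - 1 := by
        rw [Nat.cast_sub (by omega : 1 ≤ m - ⌊t⌋₊), hcast1]
        norm_num
      have hW2 : ∀ᵐ α ∂muI, (1 - (t - (⌊t⌋₊:ℝ)) + α ∈ Set.Icc (0:ℝ) 1 →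
          ((W f) (m - ⌊t⌋₊ - 1) : ℝ → F) (1 - (t - (⌊t⌋₊:ℝ)) + α)
            = (f : ℝ → F) (((m - ⌊t⌋₊ - 1 : ℕ) : ℝ) + (1 - (t - (⌊t⌋₊:ℝ)) + α))) :=
        RightShiftBCL.ae_add_muI (1 - (t - (⌊t⌋₊:ℝ))) measurableSet_Icc
          (p := fun x => ((W f) (m - ⌊t⌋₊ - 1) : ℝ → F) x
            = (f : ℝ → F) (((m - ⌊t⌋₊ - 1 : ℕ) : ℝ) + x)) (hprop f (m - ⌊t⌋₊ - 1))
      have hE1f := hE1 ((W f) (m - ⌊t⌋₊ - 1))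
      apply Lp.ext
      filter_upwards [hA, hSf, hE0f, hE1f, hW1, hW2,
        Lp.coeFn_add (E0 ((W f) (m - ⌊t⌋₊))) (E1 ((W f) (m - ⌊t⌋₊ - 1))),
        RightShiftBCL.muI_mem, RightShiftBCL.muI_ae_ne (t - (⌊t⌋₊:ℝ))]
        with α hAα hSα hE0α hE1α hW1α hW2α haddα hα hne
      have hmem : (m:ℝ) + α ∈ Set.Ici (0:ℝ) := RightShiftBCL.Ici_nonneg_mem m hα
      rw [hAα, hSα hmem, haddα]
      simp only [Pi.add_apply]
      rw [hE0α, hE1α]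
      have hcond : t ≤ (m:ℝ) + α := by linarith [hα.1]
      rw [if_pos hcond]
      rcases lt_trichotomy α (t - (⌊t⌋₊:ℝ)) with hc | hc | hc
      · rw [if_neg (not_le.mpr hc), if_pos (le_of_lt hc)]
        have hpre : 1 - (t - (⌊t⌋₊:ℝ)) + α ∈ Set.Icc (0:ℝ) 1 :=
          ⟨by linarith [hα.1], by linarith⟩
        rw [hW2α hpre, zero_add, hcast2]
        congr 1
        ring
      · exact absurd hc hne
      · rw [if_pos (le_of_lt hc), if_neg (not_le.mpr hc)]
        have hpre : -(t - (⌊t⌋₊:ℝ)) + α ∈ Set.Icc (0:ℝ) 1 :=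
          ⟨by linarith, by linarith [hα.2]⟩
        have hW1α' := hW1α hpre
        rw [neg_add_eq_sub] at hW1α'
        rw [hW1α', add_zero, hcast1]
        congr 1
        ring
    · -- m = ⌊t⌋
      rw [if_pos h1, if_neg h2, add_zero]
      have hm : m = ⌊t⌋₊ := by omega
      have hmr : (m:ℝ) = (⌊t⌋₊ : ℝ) := by exact_mod_cast hm
      apply Lp.ext
      filter_upwards [hA, hSf, hE0f, hW1, RightShiftBCL.muI_mem]
        with α hAα hSα hE0α hW1α hα
      have hmem : (m:ℝ) + α ∈ Set.Ici (0:ℝ) := RightShiftBCL.Ici_nonneg_mem m hα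
      rw [hAα, hSα hmem, hE0α]
      by_cases hc : t - (⌊t⌋₊:ℝ) ≤ α
      · have hcond : t ≤ (m:ℝ) + α := by linarith
        rw [if_pos hcond, if_pos hc]
        have hpre : -(t - (⌊t⌋₊:ℝ)) + α ∈ Set.Icc (0:ℝ) 1 :=
          ⟨by linarith, by linarith [hα.2]⟩
        have hW1α' := hW1α hpre
        rw [neg_add_eq_sub] at hW1α'
        rw [hW1α', hcast1]
        congr 1
        ring
      · have hcond : ¬ t ≤ (m:ℝ) + α := by
          push_neg at hc ⊢
          linarith
        rw [if_neg hcond, if_neg hc]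
  · -- m < ⌊t⌋ : both terms vanish
    rw [if_neg h1, if_neg (by omega : ¬ ⌊t⌋₊ + 1 ≤ m), add_zero]
    have hm1 : (m:ℝ) + 1 ≤ (⌊t⌋₊ : ℝ) := by exact_mod_cast (by omega : m + 1 ≤ ⌊t⌋₊)
    apply Lp.ext
    filter_upwards [hA, hSf, RightShiftBCL.muI_mem, RightShiftBCL.muI_ae_ne 1,
      Lp.coeFn_zero F 2 muI] with α hAα hSα hα hne h0
    have hmem : (m:ℝ) + α ∈ Set.Ici (0:ℝ) := RightShiftBCL.Ici_nonneg_mem m hα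
    have hα1 : α < 1 := lt_of_le_of_ne hα.2 hne
    rw [hAα, hSα hmem, h0, if_neg (by linarith : ¬ t ≤ (m:ℝ) + α)]
    simp
end
end

section
/- Let V₁ and V₂ be doubly commuting C₀-semigroups of isometries on a complex Hilbert space H. Then H decomposes as an orthogonal direct sum H = H_{p,p} ⊕ H_{p,u} ⊕ H_{u,p} ⊕ H_{u,u} of closed subspaces, each reducing both V₁ and V₂, such that: (1) both restrictions V₁|_{H_{p,p}} and V₂|_{H_{p,p}} are completely nonunitary; (2) V₁|_{H_{p,u}} is completely nonunitary and V₂|_{H_{p,u}} is a unitary semigroup; (3) V₁|_{H_{u,p}} is a unitary semigroup and V₂|_{H_{u,p}} is completely nonunitary; (4) both V₁|_{H_{u,u}} and V₂|_{H_{u,u}} are unitary semigroups. -/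
open MeasureTheory ContinuousLinearMap
open scoped ENNReal NNReal InnerProductSpace ComplexInnerProductSpace

noncomputable section

section SemigroupDefs

variable {G : Type} [NormedAddCommGroup G] [InnerProductSpace ℂ G] [CompleteSpace G]

/-- A (C₀-) strongly continuous one-parameter semigroup of bounded operators. -/
def IsC0Semigroup (V : ℝ≥0 → G →L[ℂ] G) : Prop :=
  V 0 = 1 ∧ (∀ s t : ℝ≥0, V (s + t) = V s ∘L V t) ∧ ∀ x : G, Continuous fun t : ℝ≥0 => V t x

/-- A C₀-semigroup of isometries. -/
def IsIsometrySemigroup (V : ℝ≥0 → G →L[ℂ] G) : Prop :=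
  IsC0Semigroup V ∧ ∀ (t : ℝ≥0) (x : G), ‖V t x‖ = ‖x‖

/-- The closed subspace `L` reduces the semigroup `V`: it is invariant under every `V t`
and every `(V t)*`. -/
def ReducedBy (V : ℝ≥0 → G →L[ℂ] G) (L : Submodule ℂ G) : Prop :=
  (∀ t : ℝ≥0, ∀ x ∈ L, V t x ∈ L) ∧ ∀ t : ℝ≥0, ∀ x ∈ L, adjoint (V t) x ∈ L

/-- `T` restricts to a unitary operator on the subspace `L`. -/
def RestrictsToUnitaryOn (T : G →L[ℂ] G) (L : Submodule ℂ G) : Prop :=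
  (∀ x ∈ L, T x ∈ L) ∧ (∀ x ∈ L, ‖T x‖ = ‖x‖) ∧ ∀ y ∈ L, ∃ x ∈ L, T x = y

/-- Every `V t` restricts to a unitary operator on the subspace `L`. -/
def IsUnitarySemigroupOn (V : ℝ≥0 → G →L[ℂ] G) (L : Submodule ℂ G) : Prop :=
  ∀ t : ℝ≥0, RestrictsToUnitaryOn (V t) L

/-- A unitary C₀-semigroup: every `V t` is a surjective isometry. -/
def IsUnitarySemigroup (V : ℝ≥0 → G →L[ℂ] G) : Prop :=
  IsC0Semigroup V ∧ ∀ t : ℝ≥0, (∀ x : G, ‖V t x‖ = ‖x‖) ∧ Function.Surjective (V t)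

/-- `V` is completely nonunitary on the subspace `K`: there is no nonzero closed subspace
of `K` reducing `V` on which every `V t` restricts to a unitary. -/
def IsCnuOn (V : ℝ≥0 → G →L[ℂ] G) (K : Submodule ℂ G) : Prop :=
  ∀ L : Submodule ℂ G, IsClosed (L : Set G) → L ≤ K → ReducedBy V L →
    IsUnitarySemigroupOn V L → L = ⊥

/-- A completely nonunitary semigroup. -/
def IsCnu (V : ℝ≥0 → G →L[ℂ] G) : Prop := IsCnuOn V ⊤

/-- Two semigroups commute. -/
def SgCommute (V1 V2 : ℝ≥0 → G →L[ℂ] G) : Prop :=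
  ∀ t s : ℝ≥0, V1 t ∘L V2 s = V2 s ∘L V1 t

/-- Two semigroups doubly commute. -/
def SgDoublyCommute (V1 V2 : ℝ≥0 → G →L[ℂ] G) : Prop :=
  SgCommute V1 V2 ∧ ∀ t s : ℝ≥0, V1 t ∘L adjoint (V2 s) = adjoint (V2 s) ∘L V1 t

/-- A completely nonunitary pair of semigroups: no nonzero closed subspace reduces both
semigroups in such a way that both restrict to unitary semigroups. -/
def IsCnuPair (V1 V2 : ℝ≥0 → G →L[ℂ] G) : Prop :=
  ∀ L : Submodule ℂ G, IsClosed (L : Set G) → ReducedBy V1 L → ReducedBy V2 L →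
    IsUnitarySemigroupOn V1 L → IsUnitarySemigroupOn V2 L → L = ⊥

/-- A strongly continuous one-parameter unitary group. -/
def IsUnitaryGroup (U : ℝ → G →L[ℂ] G) : Prop :=
  U 0 = 1 ∧ (∀ s t : ℝ, U (s + t) = U s ∘L U t) ∧
  (∀ (t : ℝ) (x : G), ‖U t x‖ = ‖x‖) ∧ (∀ t : ℝ, Function.Surjective (U t)) ∧
  ∀ x : G, Continuous fun t : ℝ => U t x

/-- Two subspaces are mutually orthogonal. -/
def OrthoSubspaces (A B : Submodule ℂ G) : Prop :=
  ∀ x ∈ A, ∀ y ∈ B, ⟪x, y⟫_ℂ = 0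

end SemigroupDefs

section WoldAux

variable {G : Type} [NormedAddCommGroup G] [InnerProductSpace ℂ G] [CompleteSpace G]

lemma adj_comp_self {T : G →L[ℂ] G} (h : ∀ x, ‖T x‖ = ‖x‖) (x : G) :
    adjoint T (T x) = x := by
  apply ext_inner_right ℂ
  intro v
  rw [adjoint_inner_left]
  exact (LinearMap.norm_map_iff_inner_map_map T).1 h x v

/-- The unitary part of an isometry semigroup. -/
def Hu (V : ℝ≥0 → G →L[ℂ] G) : Submodule ℂ G :=
  ⨅ t : ℝ≥0, LinearMap.ker (((V t ∘L adjoint (V t)) - 1 : G →L[ℂ] G) : G →ₗ[ℂ] G)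

lemma mem_Hu {V : ℝ≥0 → G →L[ℂ] G} {x : G} :
    x ∈ Hu V ↔ ∀ t, V t (adjoint (V t) x) = x := by
  simp [Hu, Submodule.mem_iInf, LinearMap.mem_ker, sub_eq_zero]

lemma isClosed_Hu (V : ℝ≥0 → G →L[ℂ] G) : IsClosed (Hu V : Set G) := by
  have : (Hu V : Set G) =
      ⋂ t : ℝ≥0, (LinearMap.ker (((V t ∘L adjoint (V t)) - 1 : G →L[ℂ] G) : G →ₗ[ℂ] G) : Set G) :=
    Submodule.coe_iInf _
  rw [this]
  exact isClosed_iInter fun t => isClosed_ker _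

lemma mem_Hu_of_range {V : ℝ≥0 → G →L[ℂ] G} (hV : IsIsometrySemigroup V) {x : G}
    (hx : ∀ t, ∃ y, V t y = x) : x ∈ Hu V := by
  rw [mem_Hu]
  intro t
  obtain ⟨y, hy⟩ := hx t
  have : adjoint (V t) x = y := by rw [← hy]; exact adj_comp_self (hV.2 t) y
  rw [this, hy]

lemma range_of_mem_Hu {V : ℝ≥0 → G →L[ℂ] G} {x : G} (hx : x ∈ Hu V) (t : ℝ≥0) :
    ∃ y, V t y = x := ⟨adjoint (V t) x, mem_Hu.1 hx t⟩

lemma Hu_invariant {V : ℝ≥0 → G →L[ℂ] G} (hV : IsIsometrySemigroup V) {x : G}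
    (hx : x ∈ Hu V) (s : ℝ≥0) : V s x ∈ Hu V := by
  apply mem_Hu_of_range hV
  intro t
  obtain ⟨y, hy⟩ := range_of_mem_Hu hx t
  refine ⟨V s y, ?_⟩
  have h1 : V t (V s y) = V (t + s) y := by rw [hV.1.2.1 t s]; rfl
  have h2 : V s (V t y) = V (s + t) y := by rw [hV.1.2.1 s t]; rfl
  rw [h1, add_comm, ← h2, hy]

lemma Hu_adj_invariant {V : ℝ≥0 → G →L[ℂ] G} (hV : IsIsometrySemigroup V) {x : G}
    (hx : x ∈ Hu V) (s : ℝ≥0) : adjoint (V s) x ∈ Hu V := by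
  apply mem_Hu_of_range hV
  intro t
  obtain ⟨y, hy⟩ := range_of_mem_Hu hx (s + t)
  refine ⟨y, ?_⟩
  have h1 : V s (V t y) = V (s + t) y := by rw [hV.1.2.1 s t]; rfl
  have : adjoint (V s) x = adjoint (V s) (V s (V t y)) := by rw [h1, hy]
  rw [this, adj_comp_self (hV.2 s)]

lemma reducedBy_Hu {V : ℝ≥0 → G →L[ℂ] G} (hV : IsIsometrySemigroup V) :
    ReducedBy V (Hu V) :=
  ⟨fun t x hx => Hu_invariant hV hx t, fun t x hx => Hu_adj_invariant hV hx t⟩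

lemma le_Hu_of_unitary {V : ℝ≥0 → G →L[ℂ] G} (hV : IsIsometrySemigroup V)
    {L : Submodule ℂ G} (hu : IsUnitarySemigroupOn V L) : L ≤ Hu V := by
  intro x hx
  apply mem_Hu_of_range hV
  intro t
  obtain ⟨y, _, hy⟩ := (hu t).2.2 x hx
  exact ⟨y, hy⟩

lemma unitary_on_sub_Hu {V : ℝ≥0 → G →L[ℂ] G} (hV : IsIsometrySemigroup V)
    {K : Submodule ℂ G} (hK : K ≤ Hu V) (hred : ReducedBy V K) :
    IsUnitarySemigroupOn V K := by
  intro t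
  refine ⟨fun x hx => hred.1 t x hx, fun x _ => hV.2 t x, fun y hy => ?_⟩
  exact ⟨adjoint (V t) y, hred.2 t y hy, mem_Hu.1 (hK hy) t⟩

lemma reducedBy_orthogonal {V : ℝ≥0 → G →L[ℂ] G} {L : Submodule ℂ G}
    (h : ReducedBy V L) : ReducedBy V Lᗮ := by
  constructor
  · intro t x hx
    rw [Submodule.mem_orthogonal]
    intro u hu
    have : ⟪u, V t x⟫_ℂ = ⟪adjoint (V t) u, x⟫_ℂ := (adjoint_inner_left (V t) x u).symm
    rw [this]
    exact (Submodule.mem_orthogonal _ _).1 hx _ (h.2 t u hu)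
  · intro t x hx
    rw [Submodule.mem_orthogonal]
    intro u hu
    have : ⟪u, adjoint (V t) x⟫_ℂ = ⟪V t u, x⟫_ℂ := adjoint_inner_right (V t) u x
    rw [this]
    exact (Submodule.mem_orthogonal _ _).1 hx _ (h.1 t u hu)

lemma reducedBy_inf {V : ℝ≥0 → G →L[ℂ] G} {A B : Submodule ℂ G}
    (hA : ReducedBy V A) (hB : ReducedBy V B) : ReducedBy V (A ⊓ B) :=
  ⟨fun t x hx => ⟨hA.1 t x hx.1, hB.1 t x hx.2⟩,
   fun t x hx => ⟨hA.2 t x hx.1, hB.2 t x hx.2⟩⟩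

lemma ortho_of {C A B : Submodule ℂ G} (hA : A ≤ C) (hB : B ≤ Cᗮ) :
    OrthoSubspaces A B := fun x hx y hy =>
  (Submodule.mem_orthogonal _ _).1 (hB hy) x (hA hx)

lemma ortho_symm {A B : Submodule ℂ G} (h : OrthoSubspaces A B) : OrthoSubspaces B A :=
  fun x hx y hy => inner_eq_zero_symm.2 (h y hy x hx)

lemma cnuOn_of_le_orthogonal {V : ℝ≥0 → G →L[ℂ] G} (hV : IsIsometrySemigroup V)
    {K : Submodule ℂ G} (hK : K ≤ (Hu V)ᗮ) : IsCnuOn V K := by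
  intro L _ hLK _ hu
  have h1 : L ≤ Hu V := le_Hu_of_unitary hV hu
  rw [eq_bot_iff]
  intro x hx
  have h0 : ⟪x, x⟫_ℂ = 0 :=
    (Submodule.mem_orthogonal _ _).1 (hK (hLK hx)) x (h1 hx)
  simpa using inner_self_eq_zero.1 h0

lemma proj_comm {K : Submodule ℂ G} [Submodule.HasOrthogonalProjection K] (T : G →L[ℂ] G)
    (h1 : ∀ x ∈ K, T x ∈ K) (h2 : ∀ x ∈ Kᗮ, T x ∈ Kᗮ) (x : G) :
    (Submodule.orthogonalProjectionOnto K (T x) : G) = T (Submodule.orthogonalProjectionOnto K x) := by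
  set a : G := (Submodule.orthogonalProjectionOnto K x : G) with ha_def
  have ha : T a ∈ K := h1 a (Submodule.orthogonalProjectionOnto K x).2
  have hb : T (x - a) ∈ Kᗮ := h2 _ (Submodule.sub_starProjection_mem_orthogonal x)
  have key : T x = T a + T (x - a) := by rw [← map_add]; congr 1; abel
  rw [key, map_add, Submodule.orthogonalProjectionOnto_apply_of_mem_orthogonal hb,
    add_zero]
  have h3 : Submodule.orthogonalProjectionOnto K (T a) = ⟨T a, ha⟩ :=
    Submodule.orthogonalProjectionOnto_mem_subspace_eq_self (K := K) ⟨T a, ha⟩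
  rw [h3]

lemma proj_mem_of_stable {N M : Submodule ℂ G} [Submodule.HasOrthogonalProjection N]
    (hPM : ∀ x ∈ M, (Submodule.orthogonalProjectionOnto N x : G) ∈ M) :
    M ≤ (N ⊓ M) ⊔ (Nᗮ ⊓ M) := by
  intro x hx
  have h1 : (Submodule.orthogonalProjectionOnto N x : G) ∈ N ⊓ M :=
    ⟨(Submodule.orthogonalProjectionOnto N x).2, hPM x hx⟩
  have h2 : x - (Submodule.orthogonalProjectionOnto N x : G) ∈ Nᗮ ⊓ M :=
    ⟨Submodule.sub_starProjection_mem_orthogonal x, M.sub_mem hx (hPM x hx)⟩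
  have : x = (Submodule.orthogonalProjectionOnto N x : G) + (x - (Submodule.orthogonalProjectionOnto N x : G)) := by abel
  rw [this]
  exact Submodule.add_mem_sup h1 h2

end WoldAux

/-- Doubly commuting semigroups of isometries admit a fourfold Wold–Cooper type
decomposition `H = H_{p,p} ⊕ H_{p,u} ⊕ H_{u,p} ⊕ H_{u,u}`. -/
theorem doubly_commuting_decomposition {H : Type} [NormedAddCommGroup H]
    [InnerProductSpace ℂ H] [CompleteSpace H] (V1 V2 : ℝ≥0 → H →L[ℂ] H)
    (h1 : IsIsometrySemigroup V1) (h2 : IsIsometrySemigroup V2)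
    (hdc : SgDoublyCommute V1 V2) :
    ∃ Hpp Hpu Hup Huu : Submodule ℂ H,
      (IsClosed (Hpp : Set H) ∧ IsClosed (Hpu : Set H) ∧
        IsClosed (Hup : Set H) ∧ IsClosed (Huu : Set H)) ∧
      (OrthoSubspaces Hpp Hpu ∧ OrthoSubspaces Hpp Hup ∧ OrthoSubspaces Hpp Huu ∧
        OrthoSubspaces Hpu Hup ∧ OrthoSubspaces Hpu Huu ∧ OrthoSubspaces Hup Huu) ∧
      Hpp ⊔ Hpu ⊔ Hup ⊔ Huu = ⊤ ∧
      (ReducedBy V1 Hpp ∧ ReducedBy V2 Hpp ∧ ReducedBy V1 Hpu ∧ ReducedBy V2 Hpu ∧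
        ReducedBy V1 Hup ∧ ReducedBy V2 Hup ∧ ReducedBy V1 Huu ∧ ReducedBy V2 Huu) ∧
      (IsCnuOn V1 Hpp ∧ IsCnuOn V2 Hpp) ∧
      (IsCnuOn V1 Hpu ∧ IsUnitarySemigroupOn V2 Hpu) ∧
      (IsUnitarySemigroupOn V1 Hup ∧ IsCnuOn V2 Hup) ∧
      (IsUnitarySemigroupOn V1 Huu ∧ IsUnitarySemigroupOn V2 Huu) := by
  classical
  set K1 : Submodule ℂ H := Hu V1 with hK1def
  set K2 : Submodule ℂ H := Hu V2 with hK2def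
  -- pointwise commutation relations
  have hcomm : ∀ t s (x : H), V1 t (V2 s x) = V2 s (V1 t x) := fun t s x =>
    ContinuousLinearMap.ext_iff.1 (hdc.1 t s) x
  have hc2 : ∀ t s (x : H), V1 t (adjoint (V2 s) x) = adjoint (V2 s) (V1 t x) := fun t s x =>
    ContinuousLinearMap.ext_iff.1 (hdc.2 t s) x
  have hdca : ∀ t s, V2 s ∘L adjoint (V1 t) = adjoint (V1 t) ∘L V2 s := by
    intro t s
    have h := congrArg adjoint (hdc.2 t s)
    simpa [adjoint_comp, adjoint_adjoint] using h
  have hdcaa : ∀ t s, adjoint (V2 s) ∘L adjoint (V1 t) = adjoint (V1 t) ∘L adjoint (V2 s) := by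
    intro t s
    have h := congrArg adjoint (hdc.1 t s)
    simpa [adjoint_comp] using h
  have hca : ∀ t s (x : H), V2 s (adjoint (V1 t) x) = adjoint (V1 t) (V2 s x) := fun t s x =>
    ContinuousLinearMap.ext_iff.1 (hdca t s) x
  have hcaa : ∀ t s (x : H), adjoint (V2 s) (adjoint (V1 t) x) =
      adjoint (V1 t) (adjoint (V2 s) x) := fun t s x =>
    ContinuousLinearMap.ext_iff.1 (hdcaa t s) x
  -- K2 is reduced by V1
  have hred21 : ReducedBy V1 K2 := by
    constructor
    · intro t x hx
      rw [hK2def, mem_Hu]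
      intro s
      rw [← hc2 t s x, ← hcomm t s (adjoint (V2 s) x), mem_Hu.1 hx s]
    · intro t x hx
      rw [hK2def, mem_Hu]
      intro s
      rw [hcaa t s x, hca t s (adjoint (V2 s) x), mem_Hu.1 hx s]
  -- K1 is reduced by V2
  have hred12 : ReducedBy V2 K1 := by
    constructor
    · intro s x hx
      rw [hK1def, mem_Hu]
      intro t
      rw [← hca t s x, hcomm t s (adjoint (V1 t) x), mem_Hu.1 hx t]
    · intro s x hx
      rw [hK1def, mem_Hu]
      intro t
      rw [← hcaa t s x, hc2 t s (adjoint (V1 t) x), mem_Hu.1 hx t]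
  have hred11 : ReducedBy V1 K1 := reducedBy_Hu h1
  have hred22 : ReducedBy V2 K2 := reducedBy_Hu h2
  haveI : CompleteSpace K1 := (isClosed_Hu V1).completeSpace_coe
  haveI : CompleteSpace K2 := (isClosed_Hu V2).completeSpace_coe
  -- projection onto K1 preserves K2 and K2ᗮ
  have hP2 : ∀ s x, (Submodule.orthogonalProjectionOnto K1 (V2 s x) : H) =
      V2 s (Submodule.orthogonalProjectionOnto K1 x) :=
    fun s => proj_comm (V2 s) (hred12.1 s) ((reducedBy_orthogonal hred12).1 s)
  have hP2a : ∀ s x, (Submodule.orthogonalProjectionOnto K1 (adjoint (V2 s) x) : H) =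
      adjoint (V2 s) (Submodule.orthogonalProjectionOnto K1 x) :=
    fun s => proj_comm (adjoint (V2 s)) (hred12.2 s) ((reducedBy_orthogonal hred12).2 s)
  have hPK2 : ∀ x ∈ K2, (Submodule.orthogonalProjectionOnto K1 x : H) ∈ K2 := by
    intro x hx
    rw [hK2def, mem_Hu]
    intro s
    rw [← hP2a s x, ← hP2 s (adjoint (V2 s) x), mem_Hu.1 hx s]
  have hPK2o : ∀ x ∈ K2ᗮ, (Submodule.orthogonalProjectionOnto K1 x : H) ∈ K2ᗮ := by
    intro x hx
    rw [Submodule.mem_orthogonal]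
    intro u hu
    rw [← Submodule.starProjection_apply, ← Submodule.inner_starProjection_left_eq_right K1 u x]
    exact (Submodule.mem_orthogonal _ _).1 hx _ (hPK2 u hu)
  have hdec2 : K2 ≤ (K1 ⊓ K2) ⊔ (K1ᗮ ⊓ K2) := proj_mem_of_stable hPK2
  have hdec2o : K2ᗮ ≤ (K1 ⊓ K2ᗮ) ⊔ (K1ᗮ ⊓ K2ᗮ) := proj_mem_of_stable hPK2o
  have htop : K2 ⊔ K2ᗮ = ⊤ := Submodule.sup_orthogonal_of_hasOrthogonalProjection
  refine ⟨K1ᗮ ⊓ K2ᗮ, K1ᗮ ⊓ K2, K1 ⊓ K2ᗮ, K1 ⊓ K2, ?_, ?_, ?_, ?_, ?_, ?_, ?_, ?_⟩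
  · -- closedness
    have hinter : ∀ (A B : Submodule ℂ H), IsClosed (A : Set H) → IsClosed (B : Set H) →
        IsClosed ((A ⊓ B : Submodule ℂ H) : Set H) := by
      intro A B hA hB
      rw [Submodule.coe_inf]
      exact hA.inter hB
    exact ⟨hinter _ _ K1.isClosed_orthogonal K2.isClosed_orthogonal,
      hinter _ _ K1.isClosed_orthogonal (isClosed_Hu V2),
      hinter _ _ (isClosed_Hu V1) K2.isClosed_orthogonal,
      hinter _ _ (isClosed_Hu V1) (isClosed_Hu V2)⟩
  · -- orthogonality
    exact ⟨ortho_symm (ortho_of (inf_le_right : K1ᗮ ⊓ K2 ≤ K2) inf_le_right),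
      ortho_symm (ortho_of (inf_le_left : K1 ⊓ K2ᗮ ≤ K1) inf_le_left),
      ortho_symm (ortho_of (inf_le_left : K1 ⊓ K2 ≤ K1) inf_le_left),
      ortho_symm (ortho_of (inf_le_left : K1 ⊓ K2ᗮ ≤ K1) inf_le_left),
      ortho_symm (ortho_of (inf_le_left : K1 ⊓ K2 ≤ K1) inf_le_left),
      ortho_symm (ortho_of (inf_le_right : K1 ⊓ K2 ≤ K2) inf_le_right)⟩
  · -- sup = ⊤
    have hA : K1ᗮ ⊓ K2ᗮ ≤ K1ᗮ ⊓ K2ᗮ ⊔ K1ᗮ ⊓ K2 ⊔ K1 ⊓ K2ᗮ ⊔ K1 ⊓ K2 :=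
      (le_sup_left.trans le_sup_left).trans le_sup_left
    have hB : K1ᗮ ⊓ K2 ≤ K1ᗮ ⊓ K2ᗮ ⊔ K1ᗮ ⊓ K2 ⊔ K1 ⊓ K2ᗮ ⊔ K1 ⊓ K2 :=
      (le_sup_right.trans le_sup_left).trans le_sup_left
    have hC : K1 ⊓ K2ᗮ ≤ K1ᗮ ⊓ K2ᗮ ⊔ K1ᗮ ⊓ K2 ⊔ K1 ⊓ K2ᗮ ⊔ K1 ⊓ K2 :=
      le_sup_right.trans le_sup_left
    have hD : K1 ⊓ K2 ≤ K1ᗮ ⊓ K2ᗮ ⊔ K1ᗮ ⊓ K2 ⊔ K1 ⊓ K2ᗮ ⊔ K1 ⊓ K2 := le_sup_right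
    rw [eq_top_iff, ← htop]
    exact sup_le (hdec2.trans (sup_le hD hB)) (hdec2o.trans (sup_le hC hA))
  · -- reducing
    exact ⟨reducedBy_inf (reducedBy_orthogonal hred11) (reducedBy_orthogonal hred21),
      reducedBy_inf (reducedBy_orthogonal hred12) (reducedBy_orthogonal hred22),
      reducedBy_inf (reducedBy_orthogonal hred11) hred21,
      reducedBy_inf (reducedBy_orthogonal hred12) hred22,
      reducedBy_inf hred11 (reducedBy_orthogonal hred21),
      reducedBy_inf hred12 (reducedBy_orthogonal hred22),
      reducedBy_inf hred11 hred21, reducedBy_inf hred12 hred22⟩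
  · exact ⟨cnuOn_of_le_orthogonal h1 inf_le_left, cnuOn_of_le_orthogonal h2 inf_le_right⟩
  · exact ⟨cnuOn_of_le_orthogonal h1 inf_le_left,
      unitary_on_sub_Hu h2 inf_le_right
        (reducedBy_inf (reducedBy_orthogonal hred12) hred22)⟩
  · exact ⟨unitary_on_sub_Hu h1 inf_le_left
        (reducedBy_inf hred11 (reducedBy_orthogonal hred21)),
      cnuOn_of_le_orthogonal h2 inf_le_right⟩
  · exact ⟨unitary_on_sub_Hu h1 inf_le_left (reducedBy_inf hred11 hred21),
      unitary_on_sub_Hu h2 inf_le_right (reducedBy_inf hred12 hred22)⟩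
end
end

section
/- Let F be a complex Hilbert space and let S_F be the unilateral shift on ℓ²(ℕ, F), defined by (S_F g)_0 = 0 and (S_F g)_{m+1} = g_m. If N is a bounded operator on ℓ²(ℕ, F) that doubly commutes with S_F (i.e., N S_F = S_F N and N S_F* = S_F* N), then there exists a bounded operator ω on F such that (N g)_m = ω(g_m) for all m ∈ ℕ and g ∈ ℓ²(ℕ, F). In particular, every normal bounded operator N on ℓ²(ℕ, F) commuting with S_F has this form with ω a normal operator on F. -/
open MeasureTheory ContinuousLinearMap
open scoped ENNReal NNReal InnerProductSpace ComplexInnerProductSpace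

set_option maxHeartbeats 1000000
noncomputable section

namespace DCShift

set_option linter.unusedSectionVars false

variable {F : Type} [NormedAddCommGroup F] [InnerProductSpace ℂ F] [CompleteSpace F]

lemma single_apply' (i : ℕ) (a : F) (j : ℕ) :
    (lp.single (E := fun _ : ℕ => F) 2 i a) j = if j = i then a else 0 := by
  rcases eq_or_ne j i with h | h
  · subst h; simp [lp.single_apply_self]
  · simp [lp.single_apply_ne _ _ _ h, h]

lemma single_add (i : ℕ) (a b : F) :
    lp.single (E := fun _ : ℕ => F) 2 i (a + b) = lp.single 2 i a + lp.single 2 i b := by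
  apply lp.ext; funext j
  simp only [lp.coeFn_add, Pi.add_apply, single_apply']
  split_ifs <;> simp

def entry (N : lp (fun _ : ℕ => F) 2 →L[ℂ] lp (fun _ : ℕ => F) 2) (m k : ℕ) : F →L[ℂ] F :=
  LinearMap.mkContinuous
    { toFun := fun x => N (lp.single 2 k x) m
      map_add' := fun a b => by
        show N (lp.single 2 k (a + b)) m = N (lp.single 2 k a) m + N (lp.single 2 k b) m
        rw [single_add, map_add, lp.coeFn_add, Pi.add_apply]
      map_smul' := fun c a => by
        show N (lp.single 2 k (c • a)) m = c • N (lp.single 2 k a) m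
        rw [lp.single_smul, _root_.map_smul, lp.coeFn_smul, Pi.smul_apply] }
    ‖N‖ (fun x => by
      show ‖N (lp.single 2 k x) m‖ ≤ ‖N‖ * ‖x‖
      have h1 : ‖N (lp.single 2 k x) m‖ ≤ ‖N (lp.single 2 k x)‖ :=
        lp.norm_apply_le_norm (by norm_num) _ _
      have h2 : ‖N (lp.single 2 k x)‖ ≤ ‖N‖ * ‖lp.single (E := fun _ : ℕ => F) 2 k x‖ :=
        N.le_opNorm _
      have h3 : ‖lp.single (E := fun _ : ℕ => F) 2 k x‖ = ‖x‖ :=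
        lp.norm_single (E := fun _ : ℕ => F) (p := 2) (by norm_num) k x
      rw [h3] at h2
      exact h1.trans h2)

lemma entry_apply (N : lp (fun _ : ℕ => F) 2 →L[ℂ] lp (fun _ : ℕ => F) 2) (m k : ℕ) (x : F) :
    entry N m k x = N (lp.single 2 k x) m := rfl


lemma shift_single (S : lp (fun _ : ℕ => F) 2 →L[ℂ] lp (fun _ : ℕ => F) 2)
    (hS : ∀ g : lp (fun _ : ℕ => F) 2, (S g) 0 = 0 ∧ ∀ m : ℕ, (S g) (m + 1) = g m)
    (k : ℕ) (x : F) :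
    S (lp.single 2 k x) = lp.single 2 (k + 1) x := by
  apply lp.ext; funext j
  cases j with
  | zero => rw [(hS _).1, single_apply']; simp
  | succ m => rw [(hS _).2, single_apply', single_apply']; simp

lemma adj_apply (S : lp (fun _ : ℕ => F) 2 →L[ℂ] lp (fun _ : ℕ => F) 2)
    (hS : ∀ g : lp (fun _ : ℕ => F) 2, (S g) 0 = 0 ∧ ∀ m : ℕ, (S g) (m + 1) = g m)
    (g : lp (fun _ : ℕ => F) 2) (m : ℕ) :
    (ContinuousLinearMap.adjoint S g) m = g (m + 1) := by
  apply ext_inner_right ℂ; intro v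
  calc ⟪(ContinuousLinearMap.adjoint S g) m, v⟫_ℂ
      = ⟪ContinuousLinearMap.adjoint S g, lp.single 2 m v⟫_ℂ :=
        (lp.inner_single_right _ _ _).symm
    _ = ⟪g, S (lp.single 2 m v)⟫_ℂ := ContinuousLinearMap.adjoint_inner_left _ _ _
    _ = ⟪g, lp.single 2 (m + 1) v⟫_ℂ := by rw [shift_single S hS]
    _ = ⟪g (m + 1), v⟫_ℂ := lp.inner_single_right _ _ _

lemma isoS (S : lp (fun _ : ℕ => F) 2 →L[ℂ] lp (fun _ : ℕ => F) 2)
    (hS : ∀ g : lp (fun _ : ℕ => F) 2, (S g) 0 = 0 ∧ ∀ m : ℕ, (S g) (m + 1) = g m)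
    (g g' : lp (fun _ : ℕ => F) 2) : ⟪S g, S g'⟫_ℂ = ⟪g, g'⟫_ℂ := by
  have h : ContinuousLinearMap.adjoint S (S g') = g' := by
    apply lp.ext; funext m
    rw [adj_apply S hS, (hS g').2]
  rw [← ContinuousLinearMap.adjoint_inner_right S g (S g'), h]

lemma decomp (S : lp (fun _ : ℕ => F) 2 →L[ℂ] lp (fun _ : ℕ => F) 2)
    (hS : ∀ g : lp (fun _ : ℕ => F) 2, (S g) 0 = 0 ∧ ∀ m : ℕ, (S g) (m + 1) = g m)
    (h : lp (fun _ : ℕ => F) 2) :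
    ⟪h, h⟫_ℂ = ⟪h 0, h 0⟫_ℂ
      + ⟪ContinuousLinearMap.adjoint S h, ContinuousLinearMap.adjoint S h⟫_ℂ := by
  have hdec : h = lp.single 2 0 (h 0) + S (ContinuousLinearMap.adjoint S h) := by
    apply lp.ext; funext j
    rw [lp.coeFn_add, Pi.add_apply, single_apply']
    cases j with
    | zero => rw [(hS _).1]; simp
    | succ m => rw [(hS _).2, adj_apply S hS]; simp
  have hcross : ⟪(lp.single 2 0 (h 0) : lp (fun _ : ℕ => F) 2),
      S (ContinuousLinearMap.adjoint S h)⟫_ℂ = 0 := by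
    rw [lp.inner_single_left, (hS _).1, inner_zero_right]
  have hcross2 : ⟪S (ContinuousLinearMap.adjoint S h),
      (lp.single 2 0 (h 0) : lp (fun _ : ℕ => F) 2)⟫_ℂ = 0 := by
    rw [← inner_conj_symm, hcross, map_zero]
  conv_lhs => rw [hdec]
  rw [inner_add_add_self, hcross, hcross2, lp.inner_single_left, lp.single_apply_self,
    isoS S hS]
  ring


lemma key (S : lp (fun _ : ℕ => F) 2 →L[ℂ] lp (fun _ : ℕ => F) 2)
    (hS : ∀ g : lp (fun _ : ℕ => F) 2, (S g) 0 = 0 ∧ ∀ m : ℕ, (S g) (m + 1) = g m)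
    (N : lp (fun _ : ℕ => F) 2 →L[ℂ] lp (fun _ : ℕ => F) 2)
    (hc : N ∘L S = S ∘L N)
    (h0 : ∀ (x : F) (m : ℕ), (N (lp.single 2 0 x)) (m + 1) = 0) :
    (∀ (g : lp (fun _ : ℕ => F) 2) (m : ℕ), (N g) m = entry N 0 0 (g m)) ∧
    (∀ (g : lp (fun _ : ℕ => F) 2) (m : ℕ),
      (ContinuousLinearMap.adjoint N g) m
        = ContinuousLinearMap.adjoint (entry N 0 0) (g m)) := by
  set ω := entry N 0 0 with hω
  have hcomm : ∀ g, N (S g) = S (N g) := fun g => by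
    have h := ContinuousLinearMap.ext_iff.mp hc g
    simpa using h
  have hNe : ∀ (k : ℕ) (x : F), N (lp.single 2 k x) = lp.single 2 k (ω x) := by
    intro k
    induction k with
    | zero =>
      intro x
      apply lp.ext; funext j
      cases j with
      | zero => rw [single_apply']; simp [hω, entry_apply]
      | succ m => rw [h0, single_apply']; simp
    | succ k ih =>
      intro x
      rw [← shift_single S hS, hcomm, ih, shift_single S hS]
  have hadj : ∀ (m : ℕ) (v : F),
      ContinuousLinearMap.adjoint N (lp.single 2 m v)
        = lp.single 2 m (ContinuousLinearMap.adjoint ω v) := by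
    intro m v
    apply lp.ext; funext j
    apply ext_inner_right ℂ; intro w
    calc ⟪(ContinuousLinearMap.adjoint N (lp.single 2 m v)) j, w⟫_ℂ
        = ⟪ContinuousLinearMap.adjoint N (lp.single 2 m v), lp.single 2 j w⟫_ℂ :=
          (lp.inner_single_right _ _ _).symm
      _ = ⟪(lp.single 2 m v : lp (fun _ : ℕ => F) 2), N (lp.single 2 j w)⟫_ℂ :=
          ContinuousLinearMap.adjoint_inner_left _ _ _
      _ = ⟪(lp.single 2 m v : lp (fun _ : ℕ => F) 2), lp.single 2 j (ω w)⟫_ℂ := by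
          rw [hNe]
      _ = ⟪v, (lp.single (E := fun _ : ℕ => F) 2 j (ω w)) m⟫_ℂ := lp.inner_single_left _ _ _
      _ = ⟪(lp.single (E := fun _ : ℕ => F) 2 m (ContinuousLinearMap.adjoint ω v)) j, w⟫_ℂ := by
          rw [single_apply', single_apply']
          rcases eq_or_ne j m with h | h
          · subst h; rw [if_pos rfl, if_pos rfl,
              ← ContinuousLinearMap.adjoint_inner_left ω w v]
          · rw [if_neg (fun hh => h hh.symm), if_neg h, inner_zero_right, inner_zero_left]
  constructor
  · intro g m
    apply ext_inner_right ℂ; intro v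
    calc ⟪(N g) m, v⟫_ℂ
        = ⟪N g, lp.single 2 m v⟫_ℂ := (lp.inner_single_right _ _ _).symm
      _ = ⟪g, ContinuousLinearMap.adjoint N (lp.single 2 m v)⟫_ℂ :=
          (ContinuousLinearMap.adjoint_inner_right _ _ _).symm
      _ = ⟪g, lp.single 2 m (ContinuousLinearMap.adjoint ω v)⟫_ℂ := by rw [hadj]
      _ = ⟪g m, ContinuousLinearMap.adjoint ω v⟫_ℂ := lp.inner_single_right _ _ _
      _ = ⟪ω (g m), v⟫_ℂ := ContinuousLinearMap.adjoint_inner_right _ _ _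
  · intro g m
    apply ext_inner_right ℂ; intro v
    calc ⟪(ContinuousLinearMap.adjoint N g) m, v⟫_ℂ
        = ⟪ContinuousLinearMap.adjoint N g, lp.single 2 m v⟫_ℂ :=
          (lp.inner_single_right _ _ _).symm
      _ = ⟪g, N (lp.single 2 m v)⟫_ℂ := ContinuousLinearMap.adjoint_inner_left _ _ _
      _ = ⟪g, lp.single 2 m (ω v)⟫_ℂ := by rw [hNe]
      _ = ⟪g m, ω v⟫_ℂ := lp.inner_single_right _ _ _
      _ = ⟪ContinuousLinearMap.adjoint ω (g m), v⟫_ℂ :=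
          (ContinuousLinearMap.adjoint_inner_left _ _ _).symm


end DCShift

open DCShift

/-- An operator on `ℓ²(ℕ, F)` doubly commuting with the unilateral shift `S_F` is of the
form `I ⊗ ω`; in particular this holds for every normal operator commuting with `S_F`,
with `ω` normal. -/
theorem double_commutant_of_shift (F : Type) [NormedAddCommGroup F]
    [InnerProductSpace ℂ F] [CompleteSpace F]
    (S : lp (fun _ : ℕ => F) 2 →L[ℂ] lp (fun _ : ℕ => F) 2)
    (hS : ∀ g : lp (fun _ : ℕ => F) 2, (S g) 0 = 0 ∧ ∀ m : ℕ, (S g) (m + 1) = g m) :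
    (∀ N : lp (fun _ : ℕ => F) 2 →L[ℂ] lp (fun _ : ℕ => F) 2,
      N ∘L S = S ∘L N →
      N ∘L ContinuousLinearMap.adjoint S = ContinuousLinearMap.adjoint S ∘L N →
      ∃ ω : F →L[ℂ] F, ∀ (g : lp (fun _ : ℕ => F) 2) (m : ℕ), (N g) m = ω (g m)) ∧
    ∀ N : lp (fun _ : ℕ => F) 2 →L[ℂ] lp (fun _ : ℕ => F) 2,
      N ∘L ContinuousLinearMap.adjoint N = ContinuousLinearMap.adjoint N ∘L N →
      N ∘L S = S ∘L N →
      ∃ ω : F →L[ℂ] F,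
        (ω ∘L ContinuousLinearMap.adjoint ω = ContinuousLinearMap.adjoint ω ∘L ω) ∧
        ∀ (g : lp (fun _ : ℕ => F) 2) (m : ℕ), (N g) m = ω (g m) := by
  constructor
  · -- part 1: doubly commuting
    intro N hc hc'
    have h0 : ∀ (x : F) (m : ℕ), (N (lp.single 2 0 x)) (m + 1) = 0 := by
      intro x m
      have hz : ContinuousLinearMap.adjoint S (lp.single 2 0 x) = 0 := by
        apply lp.ext; funext j
        rw [adj_apply S hS, single_apply']
        simp
      have h1 : (N (lp.single 2 0 x)) (m + 1)
          = (ContinuousLinearMap.adjoint S (N (lp.single 2 0 x))) m :=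
        (adj_apply S hS _ m).symm
      have h2 : ContinuousLinearMap.adjoint S (N (lp.single 2 0 x))
          = N (ContinuousLinearMap.adjoint S (lp.single 2 0 x)) := by
        have := ContinuousLinearMap.ext_iff.mp hc' (lp.single 2 0 x)
        simpa using this.symm
      rw [h1, h2, hz, map_zero]
      simp
    exact ⟨entry N 0 0, (key S hS N hc h0).1⟩
  · -- part 2: normal commuting
    intro N hn hc
    -- adjoint commutation with S†
    have hc' : ∀ g, ContinuousLinearMap.adjoint S (ContinuousLinearMap.adjoint N g)
        = ContinuousLinearMap.adjoint N (ContinuousLinearMap.adjoint S g) := by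
      intro g
      have h := congrArg ContinuousLinearMap.adjoint hc
      rw [ContinuousLinearMap.adjoint_comp, ContinuousLinearMap.adjoint_comp] at h
      have := ContinuousLinearMap.ext_iff.mp h g
      simpa using this
    -- normality: equal inner products
    have hnorm : ∀ x : lp (fun _ : ℕ => F) 2,
        ⟪N x, N x⟫_ℂ = ⟪ContinuousLinearMap.adjoint N x, ContinuousLinearMap.adjoint N x⟫_ℂ := by
      intro x
      calc ⟪N x, N x⟫_ℂ = ⟪x, ContinuousLinearMap.adjoint N (N x)⟫_ℂ :=
            (ContinuousLinearMap.adjoint_inner_right _ _ _).symm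
        _ = ⟪x, (ContinuousLinearMap.adjoint N ∘L N) x⟫_ℂ := rfl
        _ = ⟪x, (N ∘L ContinuousLinearMap.adjoint N) x⟫_ℂ := by rw [hn]
        _ = ⟪x, N (ContinuousLinearMap.adjoint N x)⟫_ℂ := rfl
        _ = ⟪ContinuousLinearMap.adjoint N x, ContinuousLinearMap.adjoint N x⟫_ℂ :=
          (ContinuousLinearMap.adjoint_inner_left _ _ _).symm
    have hcomm : ∀ g, N (S g) = S (N g) := fun g => by
      have h := ContinuousLinearMap.ext_iff.mp hc g
      simpa using h
    -- the entries a_j for j ≥ 1 vanish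
    have hSadj_single : ∀ (k : ℕ) (v : F),
        ContinuousLinearMap.adjoint S (lp.single 2 (k + 1) v) = lp.single 2 k v := by
      intro k v
      apply lp.ext; funext m
      rw [adj_apply S hS, single_apply', single_apply']
      simp
    have hadj0 : ∀ (k : ℕ) (v w : F),
        ⟪(ContinuousLinearMap.adjoint N (lp.single 2 k v)) 0, w⟫_ℂ
          = ⟪v, entry N k 0 w⟫_ℂ := by
      intro k v w
      calc ⟪(ContinuousLinearMap.adjoint N (lp.single 2 k v)) 0, w⟫_ℂ
          = ⟪ContinuousLinearMap.adjoint N (lp.single 2 k v), lp.single 2 0 w⟫_ℂ :=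
            (lp.inner_single_right _ _ _).symm
        _ = ⟪(lp.single 2 k v : lp (fun _ : ℕ => F) 2), N (lp.single 2 0 w)⟫_ℂ :=
            ContinuousLinearMap.adjoint_inner_left _ _ _
        _ = ⟪v, (N (lp.single 2 0 w)) k⟫_ℂ := lp.inner_single_left _ _ _
        _ = ⟪v, entry N k 0 w⟫_ℂ := by rw [entry_apply]
    have haz : ∀ k : ℕ, entry N (k + 1) 0 = 0 := by
      intro k
      have hv : ∀ v : F, ContinuousLinearMap.adjoint (entry N (k + 1) 0) v = 0 := by
        intro v
        have hd := decomp S hS (ContinuousLinearMap.adjoint N (lp.single 2 (k + 1) v))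
        have h1 : ContinuousLinearMap.adjoint S
            (ContinuousLinearMap.adjoint N (lp.single 2 (k + 1) v))
            = ContinuousLinearMap.adjoint N (lp.single 2 k v) := by
          rw [hc', hSadj_single]
        have h2 : ⟪ContinuousLinearMap.adjoint N (lp.single 2 (k + 1) v),
            ContinuousLinearMap.adjoint N (lp.single 2 (k + 1) v)⟫_ℂ
            = ⟪ContinuousLinearMap.adjoint N (lp.single 2 k v),
              ContinuousLinearMap.adjoint N (lp.single 2 k v)⟫_ℂ := by
          rw [← hnorm, ← hnorm, ← shift_single S hS, hcomm, isoS S hS]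
        have h3 : ⟪(ContinuousLinearMap.adjoint N (lp.single 2 (k + 1) v)) 0,
            (ContinuousLinearMap.adjoint N (lp.single 2 (k + 1) v)) 0⟫_ℂ = 0 := by
          rw [h1] at hd
          rw [h2] at hd
          exact right_eq_add.mp hd
        have h4 : (ContinuousLinearMap.adjoint N (lp.single 2 (k + 1) v)) 0
            = ContinuousLinearMap.adjoint (entry N (k + 1) 0) v := by
          apply ext_inner_right ℂ; intro w
          rw [hadj0, ContinuousLinearMap.adjoint_inner_left]
        rw [← h4, inner_self_eq_zero.mp h3]
      ext x
      apply ext_inner_left ℂ; intro v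
      rw [← ContinuousLinearMap.adjoint_inner_left (entry N (k + 1) 0), hv]
      simp
    have h0 : ∀ (x : F) (m : ℕ), (N (lp.single 2 0 x)) (m + 1) = 0 := by
      intro x m
      have : entry N (m + 1) 0 x = 0 := by rw [haz]; rfl
      rwa [entry_apply] at this
    obtain ⟨hf, hf'⟩ := key S hS N hc h0
    refine ⟨entry N 0 0, ?_, hf⟩
    set ω := entry N 0 0 with hω
    -- normality of ω
    have e1 : ∀ v : F, N (lp.single 2 0 v) = lp.single 2 0 (ω v) := by
      intro v
      apply lp.ext; funext j
      rw [hf (lp.single 2 0 v) j, single_apply', single_apply']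
      split_ifs <;> simp
    have e2 : ∀ v : F, ContinuousLinearMap.adjoint N (lp.single 2 0 v)
        = lp.single 2 0 (ContinuousLinearMap.adjoint ω v) := by
      intro v
      apply lp.ext; funext j
      rw [hf' (lp.single 2 0 v) j, single_apply', single_apply']
      split_ifs <;> simp
    have hsingle_inner : ∀ a b : F,
        ⟪(lp.single 2 0 a : lp (fun _ : ℕ => F) 2), lp.single 2 0 b⟫_ℂ = ⟪a, b⟫_ℂ := by
      intro a b
      rw [lp.inner_single_left, lp.single_apply_self]
    have h1 : ∀ v : F, ⟪ω v, ω v⟫_ℂ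
        = ⟪ContinuousLinearMap.adjoint ω v, ContinuousLinearMap.adjoint ω v⟫_ℂ := by
      intro v
      calc ⟪ω v, ω v⟫_ℂ = ⟪N (lp.single 2 0 v), N (lp.single 2 0 v)⟫_ℂ := by
            rw [e1, hsingle_inner]
        _ = ⟪ContinuousLinearMap.adjoint N (lp.single 2 0 v),
            ContinuousLinearMap.adjoint N (lp.single 2 0 v)⟫_ℂ := hnorm _
        _ = ⟪ContinuousLinearMap.adjoint ω v, ContinuousLinearMap.adjoint ω v⟫_ℂ := by
            rw [e2, hsingle_inner]
    have hmain : ∀ x : F, ⟪(ω ∘L ContinuousLinearMap.adjoint ω) x, x⟫_ℂ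
        = ⟪(ContinuousLinearMap.adjoint ω ∘L ω) x, x⟫_ℂ := by
      intro x
      calc ⟪(ω ∘L ContinuousLinearMap.adjoint ω) x, x⟫_ℂ
          = ⟪ω (ContinuousLinearMap.adjoint ω x), x⟫_ℂ := rfl
        _ = ⟪ContinuousLinearMap.adjoint ω x, ContinuousLinearMap.adjoint ω x⟫_ℂ :=
            (ContinuousLinearMap.adjoint_inner_right ω (ContinuousLinearMap.adjoint ω x) x).symm
        _ = ⟪ω x, ω x⟫_ℂ := (h1 x).symm
        _ = ⟪ContinuousLinearMap.adjoint ω (ω x), x⟫_ℂ :=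
            (ContinuousLinearMap.adjoint_inner_left ω x (ω x)).symm
        _ = ⟪(ContinuousLinearMap.adjoint ω ∘L ω) x, x⟫_ℂ := rfl
    have hlin : ((ω ∘L ContinuousLinearMap.adjoint ω : F →L[ℂ] F) : F →ₗ[ℂ] F)
        = ((ContinuousLinearMap.adjoint ω ∘L ω : F →L[ℂ] F) : F →ₗ[ℂ] F) :=
      (ext_inner_map _ _).mp hmain
    exact ContinuousLinearMap.coe_injective hlin
end
end

section
/- Let (V₁, V₂) be a commuting pair of C₀-semigroups of isometries on a complex Hilbert space H and let (V̄₁, V̄₂) on H̄ be a minimal unitary extension of (V₁, V₂). Then H̃ := H̄ ⊖ H is invariant under V̄_{1,t}* and V̄_{2,t}* for every t ≥ 0, and the dual pair (Ṽ₁, Ṽ₂) on H̃, given by Ṽ_{j,t} = V̄_{j,t}*|_{H̃}, is a completely nonunitary pair: there is no nonzero closed subspace of H̃ reducing both Ṽ₁ and Ṽ₂ on which both restrict to unitary semigroups. -/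
open MeasureTheory ContinuousLinearMap
open scoped ENNReal NNReal InnerProductSpace ComplexInnerProductSpace

noncomputable section

/-- The closed first quadrant `ℝ₊² ⊆ ℝ²`. -/
def QQ : Set (ℝ × ℝ) := {p | 0 ≤ p.1 ∧ 0 ≤ p.2}

/-- Lebesgue measure on `ℝ²` restricted to the quadrant `ℝ₊²`; `Lp F 2 nuQ` plays the
role of `L²(ℝ₊², F)`. -/
def nuQ : Measure (ℝ × ℝ) := (volume : Measure (ℝ × ℝ)).restrict QQ

/-- Lebesgue measure on `ℝ²` restricted to `ℝ² ∖ ℝ₊²`; `Lp F 2 nuQc` plays the role of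
`L²(ℝ² ∖ ℝ₊², F)`. -/
def nuQc : Measure (ℝ × ℝ) := (volume : Measure (ℝ × ℝ)).restrict QQᶜ

/-- `(V1, V2)` is a bishift-semigroup: it is jointly unitarily equivalent to the pair
`(𝒮₁^F, 𝒮₂^F)` of shift semigroups on `L²(ℝ₊², F)` for some Hilbert space `F`. -/
def IsBishiftPair {G : Type} [NormedAddCommGroup G] [InnerProductSpace ℂ G] [CompleteSpace G]
    (V1 V2 : ℝ≥0 → G →L[ℂ] G) : Prop :=
  ∃ (F : Type) (_ : NormedAddCommGroup F) (_ : InnerProductSpace ℂ F) (_ : CompleteSpace F)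
    (Z : G ≃ₗᵢ[ℂ] Lp F 2 nuQ),
    ∀ (t : ℝ≥0) (x : G),
      ((Z (V1 t x) : ℝ × ℝ → F) =ᵐ[nuQ]
        fun p => if (t : ℝ) ≤ p.1 then (Z x : ℝ × ℝ → F) (p.1 - (t : ℝ), p.2) else 0) ∧
      ((Z (V2 t x) : ℝ × ℝ → F) =ᵐ[nuQ]
        fun p => if (t : ℝ) ≤ p.2 then (Z x : ℝ × ℝ → F) (p.1, p.2 - (t : ℝ)) else 0)

/-- `(U1, U2)` on the ambient space `G` is a minimal unitary extension of the commuting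
pair of semigroups `(V1, V2)` living on the closed subspace `K` of `G`. -/
def IsMinimalUnitaryExtension {G : Type} [NormedAddCommGroup G] [InnerProductSpace ℂ G]
    [CompleteSpace G] (K : Submodule ℂ G) (V1 V2 : ℝ≥0 → ↥K →L[ℂ] ↥K)
    (U1 U2 : ℝ → G →L[ℂ] G) : Prop :=
  IsUnitaryGroup U1 ∧ IsUnitaryGroup U2 ∧
  (∀ s t : ℝ, U1 s ∘L U2 t = U2 t ∘L U1 s) ∧
  (∀ (t : ℝ≥0) (h : ↥K),
    U1 (t : ℝ) (h : G) = (V1 t h : G) ∧ U2 (t : ℝ) (h : G) = (V2 t h : G)) ∧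
  (Submodule.span ℂ
    {x : G | ∃ (t s : ℝ) (h : ↥K), x = U1 t (U2 s (h : G))}).topologicalClosure = ⊤

/-- The dual pair of `(V1, V2)` (with respect to the minimal unitary extension `(U1, U2)`
of `(V1, V2)` living on `Kᗮ`, given by `Ṽⱼ,t = (Ūⱼ,t)* |_{Kᗮ}`) is doubly commuting:
`Ṽ₁,t Ṽ₂,s = Ṽ₂,s Ṽ₁,t` and `Ṽ₁,t (Ṽ₂,s)* = (Ṽ₂,s)* Ṽ₁,t`.  Here `(Ṽ₂,s)* x`, for
`x ∈ Kᗮ`, is characterised as the unique `w ∈ Kᗮ` with `U2 s x - w ∈ K`. -/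
def DualDoublyCommutes {G : Type} [NormedAddCommGroup G] [InnerProductSpace ℂ G]
    [CompleteSpace G] (K : Submodule ℂ G) (U1 U2 : ℝ → G →L[ℂ] G) : Prop :=
  ∀ t s : ℝ, 0 ≤ t → 0 ≤ s → ∀ x ∈ Kᗮ,
    (adjoint (U1 t) (adjoint (U2 s) x) = adjoint (U2 s) (adjoint (U1 t) x)) ∧
    ∀ w w' : G, w ∈ Kᗮ → U2 s x - w ∈ K → w' ∈ Kᗮ →
      U2 s (adjoint (U1 t) x) - w' ∈ K → adjoint (U1 t) w = w'

/-- The restriction of the semigroup `V` to an invariant subspace `L`. -/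
def SGRestrict {G : Type} [NormedAddCommGroup G] [InnerProductSpace ℂ G]
    (V : ℝ≥0 → G →L[ℂ] G) (L : Submodule ℂ G)
    (hL : ∀ t : ℝ≥0, ∀ x ∈ L, V t x ∈ L) : ℝ≥0 → ↥L →L[ℂ] ↥L := fun t =>
  { toLinearMap := (V t).toLinearMap.restrict (fun x hx => hL t x hx)
    cont := Continuous.subtype_mk ((V t).continuous.comp continuous_subtype_val) _ }

/-- The dual of the pair extended by the unitary groups `(U1, U2)`, i.e. the pair
`(Ṽ₁, Ṽ₂)` on `Kᗮ` given by `Ṽⱼ,t = (Ūⱼ,t)*|_{Kᗮ}`, is a bishift-semigroup: there is a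
unitary `Z : Kᗮ → L²(ℝ₊², F)` carrying `(Ṽ₁, Ṽ₂)` to the pair of shift semigroups. -/
def DualIsBishift {G : Type} [NormedAddCommGroup G] [InnerProductSpace ℂ G]
    [CompleteSpace G] (K : Submodule ℂ G) (U1 U2 : ℝ → G →L[ℂ] G) : Prop :=
  ∃ (F : Type) (_ : NormedAddCommGroup F) (_ : InnerProductSpace ℂ F) (_ : CompleteSpace F)
    (Z : ↥Kᗮ ≃ₗᵢ[ℂ] Lp F 2 nuQ),
    ∀ t : ℝ, 0 ≤ t → ∀ f g : Lp F 2 nuQ,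
      (((g : ℝ × ℝ → F) =ᵐ[nuQ]
          fun p => if t ≤ p.1 then (f : ℝ × ℝ → F) (p.1 - t, p.2) else 0) →
        adjoint (U1 t) (Z.symm f : G) = (Z.symm g : G)) ∧
      (((g : ℝ × ℝ → F) =ᵐ[nuQ]
          fun p => if t ≤ p.2 then (f : ℝ × ℝ → F) (p.1, p.2 - t) else 0) →
        adjoint (U2 t) (Z.symm f : G) = (Z.symm g : G))

/-- `(V1, V2)` is a modified-bishift-semigroup: a completely nonunitary commuting pair of
C₀-semigroups of isometries whose dual (with respect to a minimal unitary extension) is a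
bishift-semigroup. -/
def IsModifiedBishift {G : Type} [NormedAddCommGroup G] [InnerProductSpace ℂ G]
    [CompleteSpace G] (V1 V2 : ℝ≥0 → G →L[ℂ] G) : Prop :=
  IsIsometrySemigroup V1 ∧ IsIsometrySemigroup V2 ∧ SgCommute V1 V2 ∧ IsCnuPair V1 V2 ∧
  ∃ (Ebar : Type) (_ : NormedAddCommGroup Ebar) (_ : InnerProductSpace ℂ Ebar)
    (_ : CompleteSpace Ebar) (J : G →ₗᵢ[ℂ] Ebar) (U1 U2 : ℝ → Ebar →L[ℂ] Ebar),
    IsUnitaryGroup U1 ∧ IsUnitaryGroup U2 ∧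
    (∀ s t : ℝ, U1 s ∘L U2 t = U2 t ∘L U1 s) ∧
    (∀ (t : ℝ≥0) (x : G), U1 (t : ℝ) (J x) = J (V1 t x) ∧ U2 (t : ℝ) (J x) = J (V2 t x)) ∧
    (Submodule.span ℂ
      {y : Ebar | ∃ (t s : ℝ) (x : G), y = U1 t (U2 s (J x))}).topologicalClosure = ⊤ ∧
    DualIsBishift (LinearMap.range J.toLinearMap) U1 U2

section AuxCnu

variable {G : Type} [NormedAddCommGroup G] [InnerProductSpace ℂ G] [CompleteSpace G]

lemma ug_inner_map_map (U : ℝ → G →L[ℂ] G) (hU : IsUnitaryGroup U) (t : ℝ) (x y : G) :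
    ⟪U t x, U t y⟫_ℂ = ⟪x, y⟫_ℂ := by
  exact LinearIsometry.inner_map_map ⟨(U t : G →ₗ[ℂ] G), hU.2.2.1 t⟩ x y

lemma ug_adjoint_apply_apply (U : ℝ → G →L[ℂ] G) (hU : IsUnitaryGroup U) (t : ℝ) (x : G) :
    adjoint (U t) (U t x) = x := by
  refine ext_inner_left ℂ fun v => ?_
  rw [adjoint_inner_right]
  exact ug_inner_map_map U hU t v x

lemma ug_apply_adjoint_apply (U : ℝ → G →L[ℂ] G) (hU : IsUnitaryGroup U) (t : ℝ) (x : G) :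
    U t (adjoint (U t) x) = x := by
  obtain ⟨y, rfl⟩ := hU.2.2.2.1 t x
  rw [ug_adjoint_apply_apply U hU]

lemma ug_adjoint_eq_neg (U : ℝ → G →L[ℂ] G) (hU : IsUnitaryGroup U) (t : ℝ) (x : G) :
    adjoint (U t) x = U (-t) x := by
  have h1 : U t (U (-t) x) = x := by
    have := hU.2.1 t (-t)
    rw [add_neg_cancel, hU.1] at this
    have := congrArg (fun (A : G →L[ℂ] G) => A x) this
    simpa using this.symm
  conv_lhs => rw [← h1]
  rw [ug_adjoint_apply_apply U hU]

end AuxCnu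

/-- The orthogonal complement `H̃ = H̄ ⊖ H` is invariant under the adjoints `V̄_{j,t}*`
(`t ≥ 0`), and the dual pair `Ṽ_{j,t} = V̄_{j,t}*|_{H̃}` is completely nonunitary: no
nonzero closed subspace of `H̃` reduces both `Ṽ₁` and `Ṽ₂` (invariance under `Ṽⱼ` and
under `Ṽⱼ* = P_{H̃} V̄_{j,t}|_{H̃}`) in such a way that both restrict to unitary
semigroups. -/
theorem dual_pair_is_cnu {G : Type} [NormedAddCommGroup G] [InnerProductSpace ℂ G]
    [CompleteSpace G] (K : Submodule ℂ G) [CompleteSpace ↥K]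
    (V1 V2 : ℝ≥0 → ↥K →L[ℂ] ↥K)
    (h1 : IsIsometrySemigroup V1) (h2 : IsIsometrySemigroup V2) (hc : SgCommute V1 V2)
    (U1 U2 : ℝ → G →L[ℂ] G) (hext : IsMinimalUnitaryExtension K V1 V2 U1 U2) :
    (∀ t : ℝ, 0 ≤ t → ∀ x ∈ Kᗮ, adjoint (U1 t) x ∈ Kᗮ ∧ adjoint (U2 t) x ∈ Kᗮ) ∧
    ∀ L : Submodule ℂ G, IsClosed (L : Set G) → L ≤ Kᗮ →
      (∀ t : ℝ, 0 ≤ t → ∀ x ∈ L, adjoint (U1 t) x ∈ L ∧ adjoint (U2 t) x ∈ L) →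
      (∀ t : ℝ, 0 ≤ t → ∀ x ∈ L, ∀ w : G, w ∈ Kᗮ →
        (U1 t x - w ∈ K → w ∈ L) ∧ (U2 t x - w ∈ K → w ∈ L)) →
      (∀ t : ℝ, 0 ≤ t → ∀ y ∈ L,
        (∃ x ∈ L, adjoint (U1 t) x = y) ∧ ∃ x ∈ L, adjoint (U2 t) x = y) →
      L = ⊥ := by
  obtain ⟨hU1, hU2, hUcomm, hrestr, hmin⟩ := hext
  -- U1 t, U2 t map K into K for t ≥ 0
  have hK1 : ∀ t : ℝ, 0 ≤ t → ∀ u ∈ K, U1 t u ∈ K := by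
    intro t ht u hu
    have := (hrestr ⟨t, ht⟩ ⟨u, hu⟩).1
    simp only [NNReal.coe_mk] at this
    rw [show U1 t u = _ from this]
    exact (V1 ⟨t, ht⟩ ⟨u, hu⟩).2
  have hK2 : ∀ t : ℝ, 0 ≤ t → ∀ u ∈ K, U2 t u ∈ K := by
    intro t ht u hu
    have := (hrestr ⟨t, ht⟩ ⟨u, hu⟩).2
    simp only [NNReal.coe_mk] at this
    rw [show U2 t u = _ from this]
    exact (V2 ⟨t, ht⟩ ⟨u, hu⟩).2
  constructor
  · intro t ht x hx
    constructor
    · rw [Submodule.mem_orthogonal]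
      intro u hu
      rw [adjoint_inner_right]
      exact (Submodule.mem_orthogonal K x).mp hx _ (hK1 t ht u hu)
    · rw [Submodule.mem_orthogonal]
      intro u hu
      rw [adjoint_inner_right]
      exact (Submodule.mem_orthogonal K x).mp hx _ (hK2 t ht u hu)
  · intro L _hLclosed hLK hinv _hcomp hsurj
    -- For t ≥ 0, U1 t and U2 t map L onto L (via surjectivity of the adjoints)
    have memL1 : ∀ t : ℝ, 0 ≤ t → ∀ x ∈ L, U1 t x ∈ L := by
      intro t ht x hx
      obtain ⟨y, hyL, hyx⟩ := (hsurj t ht x hx).1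
      rw [← hyx, ug_apply_adjoint_apply U1 hU1]
      exact hyL
    have memL2 : ∀ t : ℝ, 0 ≤ t → ∀ x ∈ L, U2 t x ∈ L := by
      intro t ht x hx
      obtain ⟨y, hyL, hyx⟩ := (hsurj t ht x hx).2
      rw [← hyx, ug_apply_adjoint_apply U2 hU2]
      exact hyL
    -- Hence L is invariant under adjoint (U j t) for all real t
    have memAdj1 : ∀ t : ℝ, ∀ x ∈ L, adjoint (U1 t) x ∈ L := by
      intro t x hx
      rcases le_or_gt 0 t with h | h
      · exact (hinv t h x hx).1
      · rw [ug_adjoint_eq_neg U1 hU1]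
        exact memL1 (-t) (by linarith) x hx
    have memAdj2 : ∀ t : ℝ, ∀ x ∈ L, adjoint (U2 t) x ∈ L := by
      intro t x hx
      rcases le_or_gt 0 t with h | h
      · exact (hinv t h x hx).2
      · rw [ug_adjoint_eq_neg U2 hU2]
        exact memL2 (-t) (by linarith) x hx
    -- Every x ∈ L is orthogonal to all generators U1 t (U2 s h), h ∈ K
    have hgen : ∀ x ∈ L, ∀ (t s : ℝ) (h : ↥K), ⟪U1 t (U2 s (h : G)), x⟫_ℂ = 0 := by
      intro x hx t s h
      rw [← adjoint_inner_right, ← adjoint_inner_right]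
      have hmem : adjoint (U2 s) (adjoint (U1 t) x) ∈ Kᗮ :=
        hLK (memAdj2 s _ (memAdj1 t x hx))
      exact (Submodule.mem_orthogonal K _).mp hmem _ h.2
    -- Conclude: L ≤ (span of generators)ᗮ = ⊥
    have hbot : (Submodule.span ℂ
        {x : G | ∃ (t s : ℝ) (h : ↥K), x = U1 t (U2 s (h : G))})ᗮ = ⊥ :=
      Submodule.topologicalClosure_eq_top_iff.mp hmin
    rw [← le_bot_iff, ← hbot]
    intro x hx
    rw [Submodule.mem_orthogonal]
    intro u hu
    induction hu using Submodule.span_induction with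
    | mem u hu =>
        obtain ⟨t, s, h, rfl⟩ := hu
        exact hgen x hx t s h
    | zero => simp
    | add u v _ _ hu hv => rw [inner_add_left, hu, hv, add_zero]
    | smul c u _ hu => rw [inner_smul_left, hu, mul_zero]
end
end

section
/- Let (V₁, V₂) be a completely nonunitary commuting pair of C₀-semigroups of isometries on a complex Hilbert space H and let (V̄₁, V̄₂) on H̄ be a minimal unitary extension of (V₁, V₂). Then the pair of unitary groups ((V̄₁)*, (V̄₂)*) on H̄ is a minimal unitary extension of the dual pair (Ṽ₁, Ṽ₂) on H̃ = H̄ ⊖ H; in particular, the closed linear span of {V̄_{1,t}* V̄_{2,s}* h̃ : t,s ∈ ℝ, h̃ ∈ H̃} equals H̄, and consequently the dual of (Ṽ₁, Ṽ₂) is (V₁, V₂). -/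
open MeasureTheory ContinuousLinearMap
open scoped ENNReal NNReal InnerProductSpace ComplexInnerProductSpace

noncomputable section

section DualOfDualHelpers

variable {G : Type} [NormedAddCommGroup G] [InnerProductSpace ℂ G]

lemma UG.apply_apply {U : ℝ → G →L[ℂ] G} (hU : IsUnitaryGroup U) (a b : ℝ) (x : G) :
    U a (U b x) = U (a + b) x := by rw [hU.2.1 a b]; rfl

lemma UG.apply_neg_apply {U : ℝ → G →L[ℂ] G} (hU : IsUnitaryGroup U) (t : ℝ) (x : G) :
    U t (U (-t) x) = x := by
  rw [UG.apply_apply hU, add_neg_cancel, hU.1]; rfl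

lemma UG.inner_map {U : ℝ → G →L[ℂ] G} (hU : IsUnitaryGroup U) (t : ℝ) (x y : G) :
    ⟪U t x, U t y⟫_ℂ = ⟪x, y⟫_ℂ :=
  LinearIsometry.inner_map_map ⟨(U t).toLinearMap, hU.2.2.1 t⟩ x y

lemma UG.adjoint_eq {G : Type} [NormedAddCommGroup G] [InnerProductSpace ℂ G] [CompleteSpace G]
    {U : ℝ → G →L[ℂ] G} (hU : IsUnitaryGroup U) (t : ℝ) : adjoint (U t) = U (-t) := by
  ext x
  apply ext_inner_right ℂ
  intro y
  rw [adjoint_inner_left]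
  conv_rhs => rw [← UG.inner_map hU t]
  rw [UG.apply_neg_apply hU]

lemma mem_orth_span {S : Set G} {w : G} (h : ∀ u ∈ S, ⟪u, w⟫_ℂ = 0) :
    w ∈ (Submodule.span ℂ S)ᗮ := by
  rw [Submodule.mem_orthogonal]
  intro u hu
  induction hu using Submodule.span_induction with
  | mem x hx => exact h x hx
  | zero => simp
  | add x y _ _ hx hy => rw [inner_add_left, hx, hy, add_zero]
  | smul c x _ hx => rw [inner_smul_left, hx, mul_zero]

end DualOfDualHelpers

/-- For a completely nonunitary commuting pair `(V₁, V₂)` with minimal unitary extension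
`(V̄₁, V̄₂)` on `H̄`, the pair of adjoint groups `((V̄₁)*, (V̄₂)*)` is a minimal unitary
extension of the dual pair on `H̃ = H̄ ⊖ H`; in particular the closed span of
`{V̄_{1,t}* V̄_{2,s}* h̃}` is all of `H̄`, and the dual of the dual is `(V₁, V₂)`. -/
theorem dual_of_dual {G : Type} [NormedAddCommGroup G] [InnerProductSpace ℂ G]
    [CompleteSpace G] (K : Submodule ℂ G) [CompleteSpace ↥K]
    (V1 V2 : ℝ≥0 → ↥K →L[ℂ] ↥K)
    (h1 : IsIsometrySemigroup V1) (h2 : IsIsometrySemigroup V2) (hc : SgCommute V1 V2)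
    (hcnu : IsCnuPair V1 V2)
    (U1 U2 : ℝ → G →L[ℂ] G) (hext : IsMinimalUnitaryExtension K V1 V2 U1 U2) :
    (∀ t : ℝ, 0 ≤ t → ∀ x ∈ Kᗮ, adjoint (U1 t) x ∈ Kᗮ ∧ adjoint (U2 t) x ∈ Kᗮ) ∧
    (Submodule.span ℂ {x : G | ∃ (t s : ℝ), ∃ y ∈ Kᗮ,
        x = adjoint (U1 t) (adjoint (U2 s) y)}).topologicalClosure = ⊤ ∧
    Kᗮᗮ = K ∧
    ∀ (t : ℝ≥0) (h : ↥K),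
      adjoint (adjoint (U1 (t : ℝ))) (h : G) = (V1 t h : G) ∧
      adjoint (adjoint (U2 (t : ℝ))) (h : G) = (V2 t h : G) := by
  obtain ⟨hU1, hU2, hcomm, hagree, hmin⟩ := hext
  -- K is invariant under U1 t and U2 t for t ≥ 0
  have hKinv : ∀ t : ℝ, 0 ≤ t → ∀ u ∈ K, U1 t u ∈ K ∧ U2 t u ∈ K := by
    intro t ht u hu
    have h1' : U1 t u = ((V1 ⟨t, ht⟩ ⟨u, hu⟩ : ↥K) : G) := (hagree ⟨t, ht⟩ ⟨u, hu⟩).1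
    have h2' : U2 t u = ((V2 ⟨t, ht⟩ ⟨u, hu⟩ : ↥K) : G) := (hagree ⟨t, ht⟩ ⟨u, hu⟩).2
    rw [h1', h2']
    exact ⟨Submodule.coe_mem _, Submodule.coe_mem _⟩
  have part1 : ∀ t : ℝ, 0 ≤ t → ∀ x ∈ Kᗮ,
      adjoint (U1 t) x ∈ Kᗮ ∧ adjoint (U2 t) x ∈ Kᗮ := by
    intro t ht x hx
    constructor
    · rw [Submodule.mem_orthogonal]
      intro u hu
      rw [adjoint_inner_right]
      exact (Submodule.mem_orthogonal K x).mp hx _ (hKinv t ht u hu).1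
    · rw [Submodule.mem_orthogonal]
      intro u hu
      rw [adjoint_inner_right]
      exact (Submodule.mem_orthogonal K x).mp hx _ (hKinv t ht u hu).2
  have part3 : Kᗮᗮ = K := Submodule.orthogonal_orthogonal K
  -- the set rewritten without adjoints
  have hsetEq : {x : G | ∃ (t s : ℝ), ∃ y ∈ Kᗮ, x = adjoint (U1 t) (adjoint (U2 s) y)} =
      {x : G | ∃ t s : ℝ, ∃ y ∈ Kᗮ, x = U1 t (U2 s y)} := by
    ext x
    constructor
    · rintro ⟨t, s, y, hy, rfl⟩
      exact ⟨-t, -s, y, hy, by rw [UG.adjoint_eq hU1, UG.adjoint_eq hU2]⟩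
    · rintro ⟨t, s, y, hy, rfl⟩
      exact ⟨-t, -s, y, hy, by rw [UG.adjoint_eq hU1, UG.adjoint_eq hU2, neg_neg, neg_neg]⟩
  set S : Set G := {x : G | ∃ t s : ℝ, ∃ y ∈ Kᗮ, x = U1 t (U2 s y)} with hSdef
  -- every element of Kᗮ lies in S
  have hKorthS : ∀ y ∈ Kᗮ, y ∈ S := by
    intro y hy
    exact ⟨0, 0, y, hy, by simp [hU1.1, hU2.1]⟩
  have hNleK : (Submodule.span ℂ S)ᗮ ≤ K := by
    intro x hx
    rw [← part3, Submodule.mem_orthogonal]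
    intro y hy
    exact (Submodule.mem_orthogonal _ x).mp hx _ (Submodule.subset_span (hKorthS y hy))
  -- invariance of the orthogonal complement N under both groups
  have hNinv : ∀ r : ℝ, ∀ x ∈ (Submodule.span ℂ S)ᗮ,
      U1 r x ∈ (Submodule.span ℂ S)ᗮ ∧ U2 r x ∈ (Submodule.span ℂ S)ᗮ := by
    intro r x hx
    constructor
    · apply mem_orth_span
      rintro u ⟨t, s, y, hy, rfl⟩
      calc ⟪U1 t (U2 s y), U1 r x⟫_ℂ
          = ⟪U1 r (U1 (-r) (U1 t (U2 s y))), U1 r x⟫_ℂ := by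
            rw [UG.apply_neg_apply hU1]
        _ = ⟪U1 (-r) (U1 t (U2 s y)), x⟫_ℂ := UG.inner_map hU1 r _ _
        _ = 0 := by
            rw [UG.apply_apply hU1]
            exact (Submodule.mem_orthogonal _ x).mp hx _
              (Submodule.subset_span ⟨-r + t, s, y, hy, rfl⟩)
    · apply mem_orth_span
      rintro u ⟨t, s, y, hy, rfl⟩
      calc ⟪U1 t (U2 s y), U2 r x⟫_ℂ
          = ⟪U2 r (U2 (-r) (U1 t (U2 s y))), U2 r x⟫_ℂ := by
            rw [UG.apply_neg_apply hU2]
        _ = ⟪U2 (-r) (U1 t (U2 s y)), x⟫_ℂ := UG.inner_map hU2 r _ _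
        _ = 0 := by
            have hc : U2 (-r) (U1 t (U2 s y)) = U1 t (U2 (-r + s) y) := by
              have h := congrArg (fun A => A (U2 s y)) (hcomm t (-r))
              simp only [ContinuousLinearMap.comp_apply] at h
              rw [← h, UG.apply_apply hU2]
            rw [hc]
            exact (Submodule.mem_orthogonal _ x).mp hx _
              (Submodule.subset_span ⟨t, -r + s, y, hy, rfl⟩)
  set N : Submodule ℂ G := (Submodule.span ℂ S)ᗮ with hNdef
  set L : Submodule ℂ ↥K := N.comap K.subtype with hLdef
  have hLclosed : IsClosed (L : Set ↥K) := by
    have : (L : Set ↥K) = (Subtype.val : ↥K → G) ⁻¹' (N : Set G) := rfl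
    rw [this]
    exact (Submodule.isClosed_orthogonal _).preimage continuous_subtype_val
  -- the adjoint of the restricted semigroup is given by the group at negative time
  have hadjV : ∀ (W : ℝ → G →L[ℂ] G) (Vv : ℝ≥0 → ↥K →L[ℂ] ↥K), IsUnitaryGroup W →
      (∀ (t : ℝ≥0) (h : ↥K), W (t : ℝ) (h : G) = ((Vv t h : ↥K) : G)) →
      ∀ (t : ℝ≥0) (x : ↥K) (hm : W (-(t : ℝ)) (x : G) ∈ K),
      adjoint (Vv t) x = ⟨W (-(t : ℝ)) (x : G), hm⟩ := by
    intro W Vv hW hWV t x hm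
    apply ext_inner_right ℂ
    intro h
    rw [adjoint_inner_left]
    show ⟪(x : G), ((Vv t h : ↥K) : G)⟫_ℂ = ⟪W (-(t : ℝ)) (x : G), (h : G)⟫_ℂ
    rw [← hWV t h]
    conv_rhs => rw [← UG.inner_map hW (t : ℝ)]
    rw [UG.apply_neg_apply hW]
  have main : ∀ (W : ℝ → G →L[ℂ] G) (Vv : ℝ≥0 → ↥K →L[ℂ] ↥K),
      IsUnitaryGroup W → (∀ (t : ℝ≥0) (h : ↥K), W (t : ℝ) (h : G) = ((Vv t h : ↥K) : G)) →
      (∀ r : ℝ, ∀ x ∈ N, W r x ∈ N) → (∀ (t : ℝ≥0) (x : ↥K), ‖Vv t x‖ = ‖x‖) →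
      ReducedBy Vv L ∧ IsUnitarySemigroupOn Vv L := by
    intro W Vv hW hWV hWinv hnorm
    have hfwd : ∀ (t : ℝ≥0), ∀ x ∈ L, Vv t x ∈ L := by
      intro t x hx
      have hmem : ((Vv t x : ↥K) : G) ∈ N := by
        rw [← hWV t x]; exact hWinv _ _ hx
      exact hmem
    have hmemK : ∀ (t : ℝ≥0), ∀ x : ↥K, x ∈ L →
        W (-(t : ℝ)) (x : G) ∈ K ∧ W (-(t : ℝ)) (x : G) ∈ N := by
      intro t x hx
      have hn := hWinv (-(t : ℝ)) _ hx
      exact ⟨hNleK hn, hn⟩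
    refine ⟨⟨hfwd, ?_⟩, ?_⟩
    · intro t x hx
      rw [hadjV W Vv hW hWV t x (hmemK t x hx).1]
      exact (hmemK t x hx).2
    · intro t
      refine ⟨hfwd t, fun x _ => hnorm t x, ?_⟩
      intro y hy
      refine ⟨⟨W (-(t : ℝ)) (y : G), (hmemK t y hy).1⟩, (hmemK t y hy).2, ?_⟩
      apply Subtype.ext
      rw [← hWV t]
      show W (t : ℝ) (W (-(t : ℝ)) (y : G)) = (y : G)
      exact UG.apply_neg_apply hW _ _
  have hL1 := main U1 V1 hU1 (fun t h => (hagree t h).1) (fun r x hx => (hNinv r x hx).1)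
    (fun t x => h1.2 t x)
  have hL2 := main U2 V2 hU2 (fun t h => (hagree t h).2) (fun r x hx => (hNinv r x hx).2)
    (fun t x => h2.2 t x)
  have hLbot : L = ⊥ := hcnu L hLclosed hL1.1 hL2.1 hL1.2 hL2.2
  have hNbot : N = ⊥ := by
    rw [Submodule.eq_bot_iff]
    intro x hx
    have hxK : x ∈ K := hNleK hx
    have hxL : (⟨x, hxK⟩ : ↥K) ∈ L := hx
    rw [hLbot, Submodule.mem_bot] at hxL
    exact congrArg Subtype.val hxL
  have part2 : (Submodule.span ℂ {x : G | ∃ (t s : ℝ), ∃ y ∈ Kᗮ,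
      x = adjoint (U1 t) (adjoint (U2 s) y)}).topologicalClosure = ⊤ := by
    rw [hsetEq, ← Submodule.orthogonal_orthogonal_eq_closure, ← hNdef, hNbot,
      Submodule.bot_orthogonal_eq_top]
  refine ⟨part1, part2, part3, ?_⟩
  intro t h
  constructor
  · rw [adjoint_adjoint]; exact (hagree t h).1
  · rw [adjoint_adjoint]; exact (hagree t h).2
end
end
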